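/- arXiv:1901.00517 — 9 statements merged into one kernel-verified Lean document; each statement's English description precedes it below -/
import Mathlib

section
/- An almost disjoint family 𝒜 of infinite subsets of ℕ is ℝ-embeddable if and only if there exists an injective function f : ℕ → ℝ with f(n) ∈ ℚ for every n ∈ ℕ such that for every A ∈ 𝒜 the limit x_A = lim_{n∈A} f(n) exists, each x_A is irrational, and x_A ≠ x_B for distinct A, B ∈ 𝒜. -/
open Filter Topology Set

/-- Convergence of `f` to `x` along the filter of cofinite subsets of `A`,
i.e. `f` restricted to `A` converges to `x` at infinity. -/
def LimAlong {X : Type*} [TopologicalSpace X] (A : Set ℕ) (f : ℕ → X) (x : X) : Prop :=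
  Filter.Tendsto f (Filter.atTop ⊓ Filter.principal A) (nhds x)

/-- An almost disjoint family: an infinite family of infinite subsets of `ℕ`
with pairwise finite intersections. -/
def IsAlmostDisjointFamily (𝒜 : Set (Set ℕ)) : Prop :=
  𝒜.Infinite ∧ (∀ A ∈ 𝒜, A.Infinite) ∧
    ∀ A ∈ 𝒜, ∀ B ∈ 𝒜, A ≠ B → (A ∩ B).Finite

/-- `𝒜` is `ℝ`-embeddable: there is `f : ℕ → ℝ` such that the limits of `f` along members
of `𝒜` exist and are distinct for distinct members. -/
def REmbeddable (𝒜 : Set (Set ℕ)) : Prop :=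
  ∃ (f : ℕ → ℝ) (x : Set ℕ → ℝ),
    (∀ A ∈ 𝒜, LimAlong A f (x A)) ∧ Set.InjOn x 𝒜

noncomputable section
namespace REaux
-- assume p1 contents (tested separately); here reproduce minimal defs
def qe : ℕ → ℚ := (Denumerable.eqv ℚ).symm
lemma qe_bij : Function.Bijective qe := (Denumerable.eqv ℚ).symm.bijective
def w (n : ℕ) : ℝ := (1/2) ^ (Nat.factorial n)
lemma w_pos (n : ℕ) : 0 < w n := by unfold w; positivity
lemma w_le (n : ℕ) : w n ≤ (1/2)^n :=
  pow_le_pow_of_le_one (by norm_num) (by norm_num) (Nat.self_le_factorial n)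
lemma summable_w : Summable w :=
  Summable.of_nonneg_of_le (fun n => (w_pos n).le) w_le summable_geometric_two
def term (t : ℝ) (n : ℕ) : ℝ := if (qe n : ℝ) < t then w n else 0
lemma term_nonneg (t : ℝ) (n : ℕ) : 0 ≤ term t n := by
  unfold term; split
  · exact (w_pos n).le
  · exact le_refl _
lemma term_le_w (t : ℝ) (n : ℕ) : term t n ≤ w n := by
  unfold term; split
  · exact le_refl _
  · exact (w_pos n).le
lemma abs_term_le (t : ℝ) (n : ℕ) : |term t n| ≤ w n := by
  rw [abs_of_nonneg (term_nonneg t n)]; exact term_le_w t n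
lemma summable_term (t : ℝ) : Summable (term t) :=
  Summable.of_nonneg_of_le (term_nonneg t) (term_le_w t) summable_w
def theta (t : ℝ) : ℝ := ∑' n, term t n

lemma qe_surj : Function.Surjective qe := qe_bij.2

lemma term_mono {t s : ℝ} (hts : t ≤ s) (n : ℕ) : term t n ≤ term s n := by
  unfold term
  split
  · rw [if_pos (lt_of_lt_of_le (by assumption) hts)]
  · split
    · exact (w_pos n).le
    · exact le_refl _

lemma theta_strictMono : StrictMono theta := by
  intro t s hts
  obtain ⟨r, hr1, hr2⟩ := exists_rat_btwn hts
  obtain ⟨i, hi⟩ := qe_bij.2 r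
  refine Summable.tsum_lt_tsum (f := term t) (g := term s) (i := i)
    (fun n => term_mono hts.le n) ?_ (summable_term t) (summable_term s)
  unfold term
  rw [hi, if_neg (not_lt.2 hr1.le), if_pos hr2]
  exact w_pos i

-- NEW PART
lemma theta_diff_bound (s t : ℝ) (N : ℕ)
    (h : ∀ n < N, ((qe n : ℝ) < s ↔ (qe n : ℝ) < t)) :
    |theta s - theta t| ≤ ∑' k, w (k + N) := by
  have hd : Summable (fun n => term s n - term t n) :=
    (summable_term s).sub (summable_term t)
  have h0 : ∀ n < N, term s n - term t n = 0 := by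
    intro n hn
    unfold term
    by_cases hc : (qe n : ℝ) < s
    · rw [if_pos hc, if_pos ((h n hn).1 hc), sub_self]
    · rw [if_neg hc, if_neg (fun hx => hc ((h n hn).2 hx)), sub_self]
  have heq : theta s - theta t = ∑' k, (term s (k + N) - term t (k + N)) := by
    have h1 := Summable.sum_add_tsum_nat_add (f := fun n => term s n - term t n) N hd
    have h2 : ∑ i ∈ Finset.range N, (term s i - term t i) = 0 :=
      Finset.sum_eq_zero (fun i hi => h0 i (Finset.mem_range.mp hi))
    have h3 : ∑' n, (term s n - term t n) = theta s - theta t := by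
      unfold theta
      exact Summable.tsum_sub (summable_term s) (summable_term t)
    rw [h2, zero_add, h3] at h1
    exact h1.symm
  rw [heq]
  have habs : ∀ n, |term s n - term t n| ≤ w n := by
    intro n
    rw [abs_sub_le_iff]
    constructor
    · exact (sub_le_self _ (term_nonneg t n)).trans (term_le_w s n)
    · exact (sub_le_self _ (term_nonneg s n)).trans (term_le_w t n)
  have hwN : Summable (fun k => w (k + N)) := by
    have := (summable_nat_add_iff (f := w) N).mpr summable_w
    exact this
  have hdN : Summable (fun k => term s (k + N) - term t (k + N)) := by
    have := (summable_nat_add_iff (f := fun n => term s n - term t n) N).mpr hd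
    exact this
  rw [abs_le]
  constructor
  · rw [neg_le, ← tsum_neg]
    apply Summable.tsum_le_tsum _ hdN.neg hwN
    intro k
    rw [neg_sub]
    exact (abs_sub_le_iff.mp (habs (k + N))).2
  · exact Summable.tsum_le_tsum (fun k => (abs_le.mp (habs (k + N))).2) hdN hwN

end REaux

namespace REaux2
open REaux

lemma theta_continuousAt {t : ℝ} (ht : Irrational t) : ContinuousAt theta t := by
  rw [ContinuousAt, Metric.tendsto_nhds]
  intro ε hε
  obtain ⟨N, hN⟩ : ∃ N, ∑' k, w (k + N) < ε :=
    ((tendsto_sum_nat_add w).eventually (gt_mem_nhds hε)).exists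
  have hev : ∀ᶠ s in 𝓝 t, ∀ n ∈ Finset.range N, ((qe n : ℝ) < s ↔ (qe n : ℝ) < t) := by
    rw [Filter.eventually_all_finset]
    intro n _
    have hne : (qe n : ℝ) ≠ t := fun h => ht ⟨qe n, h⟩
    rcases lt_or_gt_of_ne hne with hlt | hgt
    · filter_upwards [isOpen_Ioi.mem_nhds (show t ∈ Ioi ((qe n : ℝ)) from hlt)] with s hs
      exact ⟨fun _ => hlt, fun _ => hs⟩
    · filter_upwards [isOpen_Iio.mem_nhds (show t ∈ Iio ((qe n : ℝ)) from hgt)] with s hs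
      constructor
      · intro h; exact absurd h (not_lt.2 hs.le)
      · intro h; exact absurd h (not_lt.2 hgt.le)
  filter_upwards [hev] with s hs
  calc dist (theta s) (theta t) = |theta s - theta t| := Real.dist_eq _ _
    _ ≤ ∑' k, w (k + N) :=
        theta_diff_bound s t N (fun n hn => hs n (Finset.mem_range.mpr hn))
    _ < ε := hN

end REaux2

namespace REaux3
open REaux

lemma factorial_add_le (m k : ℕ) :
    Nat.factorial (m+1) + k ≤ Nat.factorial (m+1+k) := by
  induction k with
  | zero => simp
  | succ k ih =>
    have h1 : Nat.factorial (m+1+k) + 1 ≤ Nat.factorial (m+1+k+1) := by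
      rw [Nat.factorial_succ]
      nlinarith [Nat.factorial_pos (m+1+k)]
    have : m + 1 + (k+1) = m+1+k+1 := by omega
    rw [this]
    omega

lemma summable_term_tail (t : ℝ) (N : ℕ) : Summable (fun k => term t (k + N)) :=
  (summable_nat_add_iff (f := term t) N).mpr (summable_term t)

lemma tsum_term_tail_le (t : ℝ) (m : ℕ) :
    ∑' k, term t (k + (m+1)) ≤ (1/2:ℝ)^(Nat.factorial (m+1)) * 2 := by
  have h1 : ∀ k, term t (k + (m+1)) ≤ (1/2:ℝ)^(Nat.factorial (m+1)) * (1/2)^k := by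
    intro k
    calc term t (k+(m+1)) ≤ w (k+(m+1)) := term_le_w _ _
      _ ≤ (1/2)^(Nat.factorial (m+1) + k) := by
          unfold w
          apply pow_le_pow_of_le_one (by norm_num) (by norm_num)
          have := factorial_add_le m k
          have h2 : m+1+k = k+(m+1) := by omega
          rw [h2] at this
          exact this
      _ = (1/2)^(Nat.factorial (m+1)) * (1/2)^k := pow_add _ _ _
  calc ∑' k, term t (k + (m+1))
      ≤ ∑' k, (1/2:ℝ)^(Nat.factorial (m+1)) * (1/2)^k := by
        apply Summable.tsum_le_tsum h1 (summable_term_tail t (m+1))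
        exact (summable_geometric_two).mul_left _
    _ = (1/2:ℝ)^(Nat.factorial (m+1)) * ∑' k, (1/2:ℝ)^k := tsum_mul_left
    _ = (1/2:ℝ)^(Nat.factorial (m+1)) * 2 := by rw [tsum_geometric_two]

lemma Et_infinite (t : ℝ) : {n : ℕ | (qe n : ℝ) < t}.Infinite := by
  obtain ⟨r, hr⟩ := exists_rat_lt t
  have h1 : {q : ℚ | (q : ℝ) < t}.Infinite := by
    apply (Set.Iio_infinite r).mono
    intro q hq
    exact lt_trans (by exact_mod_cast hq) hr
  have h2 : {n : ℕ | (qe n : ℝ) < t} = qe ⁻¹' {q : ℚ | (q : ℝ) < t} := rfl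
  rw [h2]
  exact h1.preimage (fun q _ => qe_bij.2 q)

lemma partial_eq (t : ℝ) (m : ℕ) :
    ∃ a : ℤ, ∑ n ∈ Finset.range (m+1), term t n = (a : ℝ) / 2^(Nat.factorial m) := by
  refine ⟨∑ n ∈ Finset.range (m+1),
    if (qe n : ℝ) < t then (2:ℤ)^(Nat.factorial m - Nat.factorial n) else 0, ?_⟩
  push_cast
  rw [Finset.sum_div]
  apply Finset.sum_congr rfl
  intro n hn
  have hnm : Nat.factorial n ≤ Nat.factorial m :=
    Nat.factorial_le (Nat.lt_succ_iff.mp (Finset.mem_range.mp hn))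
  unfold term w
  split
  · have hpow : (2:ℝ)^(Nat.factorial m - Nat.factorial n) * 2^(Nat.factorial n)
        = 2^(Nat.factorial m) := by
      rw [← pow_add, Nat.sub_add_cancel hnm]
    rw [eq_div_iff (by positivity)]
    rw [one_div, inv_pow, ← hpow]
    field_simp
  · simp

lemma theta_split (t : ℝ) (m : ℕ) :
    theta t = ∑ n ∈ Finset.range (m+1), term t n + ∑' k, term t (k + (m+1)) := by
  unfold theta
  exact (Summable.sum_add_tsum_nat_add (m+1) (summable_term t)).symm

lemma theta_liouville (t : ℝ) : Liouville (theta t) := by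
  intro p
  obtain ⟨m, hmE, hmp⟩ := (Et_infinite t).exists_gt (p + 1)
  obtain ⟨a, ha⟩ := partial_eq t m
  have hFm : 1 ≤ Nat.factorial m := Nat.one_le_iff_ne_zero.mpr (Nat.factorial_ne_zero m)
  have hT : theta t - (a:ℝ) / (((2:ℤ)^(Nat.factorial m) : ℤ) : ℝ)
      = ∑' k, term t (k + (m+1)) := by
    rw [theta_split t m, ha]
    push_cast
    ring
  have hTpos : 0 < ∑' k, term t (k + (m+1)) := by
    obtain ⟨j, hjE, hjm⟩ := (Et_infinite t).exists_gt m
    have hj : j - (m+1) + (m+1) = j := by omega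
    calc (0:ℝ) < w j := w_pos j
      _ = term t (j - (m+1) + (m+1)) := by
          rw [hj]; unfold term; rw [if_pos (show ((qe j : ℚ) : ℝ) < t from hjE)]
      _ ≤ ∑' k, term t (k + (m+1)) :=
          Summable.le_tsum (summable_term_tail t (m+1)) _ (fun k _ => term_nonneg _ _)
  refine ⟨a, 2^(Nat.factorial m), one_lt_pow₀ (by norm_num) (by omega), ?_, ?_⟩
  · intro h
    rw [h, sub_self] at hT
    exact absurd hT.symm (ne_of_gt hTpos)
  · rw [hT, abs_of_pos hTpos]
    push_cast
    have hlt : Nat.factorial m * p + 1 < Nat.factorial (m+1) := by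
      rw [Nat.factorial_succ]
      nlinarith [hFm, hmp]
    calc ∑' k, term t (k + (m+1))
        ≤ (1/2:ℝ)^(Nat.factorial (m+1)) * 2 := tsum_term_tail_le t m
      _ < (1/2:ℝ)^(Nat.factorial m * p + 1) * 2 := by
          apply mul_lt_mul_of_pos_right _ two_pos
          exact pow_lt_pow_right_of_lt_one₀ (by norm_num) (by norm_num) hlt
      _ = (1/2:ℝ)^(Nat.factorial m * p) := by rw [pow_succ]; ring
      _ = 1 / ((2:ℝ)^(Nat.factorial m))^p := by
          rw [div_pow, one_pow, ← pow_mul]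

end REaux3

end

section

namespace REaux4

lemma pick_exists (c ε : ℝ) (hε : 0 < ε) (F : Finset ℚ) :
    ∃ q : ℚ, q ∉ F ∧ |(q : ℝ) - c| < ε := by
  obtain ⟨r1, hr1⟩ := exists_rat_btwn (show c - ε < c by linarith)
  obtain ⟨r2, hr2⟩ := exists_rat_btwn hr1.2
  have hinf : (Set.Ioo r1 r2).Infinite := Set.Ioo_infinite (by exact_mod_cast hr2.1)
  obtain ⟨q, hq⟩ := (hinf.diff F.finite_toSet).nonempty
  refine ⟨q, fun hqF => hq.2 hqF, ?_⟩
  have h1 : (r1 : ℝ) < q := by exact_mod_cast hq.1.1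
  have h2 : (q : ℝ) < r2 := by exact_mod_cast hq.1.2
  rw [abs_lt]
  constructor <;> nlinarith [hr1.1, hr2.2]

noncomputable def pickSeq (c : ℕ → ℝ) (n : ℕ) : ℚ :=
  Classical.choose (pick_exists (c n) ((1/2)^n) (by positivity)
    ((Finset.range n).attach.image fun (k : {m // m ∈ Finset.range n}) =>
      have hk : k.1 < n := Finset.mem_range.mp k.2
      pickSeq c k.1))
termination_by n
decreasing_by all_goals exact hk

lemma pickSeq_spec (c : ℕ → ℝ) (n : ℕ) :
    pickSeq c n ∉ ((Finset.range n).attach.image fun k => pickSeq c k.1) ∧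
    |((pickSeq c n : ℚ) : ℝ) - c n| < (1/2)^n := by
  have h := Classical.choose_spec (pick_exists (c n) ((1/2)^n) (by positivity)
    ((Finset.range n).attach.image fun k => pickSeq c k.1))
  rw [pickSeq]
  convert h using 3

lemma pickSeq_injective (c : ℕ → ℝ) : Function.Injective (pickSeq c) := by
  intro a b hab
  by_contra hne
  rcases Nat.lt_or_ge a b with h | h
  · exact (pickSeq_spec c b).1 (Finset.mem_image.mpr
      ⟨⟨a, Finset.mem_range.mpr h⟩, Finset.mem_attach _ _, hab⟩)
  · have h' : b < a := by omega
    exact (pickSeq_spec c a).1 (Finset.mem_image.mpr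
      ⟨⟨b, Finset.mem_range.mpr h'⟩, Finset.mem_attach _ _, hab.symm⟩)

lemma pickSeq_tendsto (c : ℕ → ℝ) {L : Filter ℕ} (hL : L ≤ atTop) {y : ℝ}
    (hc : Tendsto c L (𝓝 y)) :
    Tendsto (fun n => ((pickSeq c n : ℚ) : ℝ)) L (𝓝 y) := by
  rw [Metric.tendsto_nhds] at hc ⊢
  intro ε hε
  have hpow : ∀ᶠ n in L, ((1:ℝ)/2)^n < ε/2 :=
    ((tendsto_pow_atTop_nhds_zero_of_lt_one (by norm_num) (by norm_num)).eventually
      (gt_mem_nhds (by linarith))).filter_mono hL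
  filter_upwards [hc (ε/2) (by linarith), hpow] with n h1 h2
  have h3 := (pickSeq_spec c n).2
  rw [Real.dist_eq] at h1 ⊢
  calc |((pickSeq c n : ℚ) : ℝ) - y|
      ≤ |((pickSeq c n : ℚ) : ℝ) - c n| + |c n - y| := abs_sub_le _ _ _
    _ < ε/2 + ε/2 := by exact add_lt_add (lt_of_lt_of_le h3 h2.le) h1
    _ = ε := by ring

end REaux4
end

noncomputable section
namespace REmain

variable (f : ℕ → ℝ) (x : Set ℕ → ℝ) (e : ℕ → Set ℕ)

def Pg (n m : ℕ) : Prop := ∀ k < m, n ∈ e k → |f n - x (e k)| < (1/2:ℝ)^m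

noncomputable def mfun (n : ℕ) : ℕ :=
  @Nat.findGreatest (Pg f x e n) (Classical.decPred _) n

noncomputable def dfun (n : ℕ) : ℝ := (1/2)^(mfun f x e n)

open Classical in
noncomputable def fmod (n : ℕ) : ℝ :=
  if h : ∃ k, (n ∈ e k ∧ ∀ j < k, n ∉ e j) ∧ |f n - x (e k)| ≤ dfun f x e n
  then x (e h.choose) else f n

lemma dfun_pos (n : ℕ) : 0 < dfun f x e n := by unfold dfun; positivity

lemma fmod_close (n : ℕ) : |fmod f x e n - f n| ≤ dfun f x e n := by
  unfold fmod
  split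
  case isTrue h =>
    rw [abs_sub_comm]
    exact h.choose_spec.2
  case isFalse h =>
    simpa using (dfun_pos f x e n).le

section withfam
variable {𝒜 : Set (Set ℕ)} (h𝒜 : IsAlmostDisjointFamily 𝒜)
  (hlim : ∀ A ∈ 𝒜, LimAlong A f (x A))
  (he : ∀ k, e k = ∅ ∨ e k ∈ 𝒜)

-- eventually (in atTop) avoid a finite set
lemma ev_notmem {S : Set ℕ} (hS : S.Finite) : ∀ᶠ n in atTop, n ∉ S := by
  obtain ⟨N, hN⟩ := hS.bddAbove
  filter_upwards [eventually_gt_atTop N] with n hn hmem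
  exact absurd (hN hmem) (not_le.mpr hn)

include h𝒜 hlim he in
lemma mfun_large {A : Set ℕ} (hA : A ∈ 𝒜) (M : ℕ) :
    ∀ᶠ n in atTop ⊓ 𝓟 A, M ≤ mfun f x e n := by
  have hPM : ∀ᶠ n in atTop ⊓ 𝓟 A, Pg f x e n M := by
    have hall : ∀ᶠ n in atTop ⊓ 𝓟 A,
        ∀ k ∈ Finset.range M, (n ∈ e k → |f n - x (e k)| < (1/2:ℝ)^M) := by
      rw [Filter.eventually_all_finset]
      intro k _
      rcases he k with hk | hk
      · filter_upwards with n hn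
        rw [hk] at hn
        exact absurd hn (Set.notMem_empty n)
      · by_cases hke : e k = A
        · have h2 := Metric.tendsto_nhds.mp (hlim A hA) ((1/2:ℝ)^M) (by positivity)
          filter_upwards [h2] with n hn _
          rw [Real.dist_eq] at hn
          rw [hke]
          exact hn
        · have hfin : (A ∩ e k).Finite :=
            h𝒜.2.2 A hA (e k) hk (fun h => hke h.symm)
          rw [Filter.eventually_inf_principal]
          filter_upwards [ev_notmem hfin] with n hn hnA hnek
          exact absurd ⟨hnA, hnek⟩ hn
    filter_upwards [hall] with n hn k hk hke
    exact hn k (Finset.mem_range.mpr hk) hke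
  have hMn : ∀ᶠ n in atTop ⊓ 𝓟 A, M ≤ n :=
    (eventually_ge_atTop M).filter_mono inf_le_left
  filter_upwards [hPM, hMn] with n h1 h2
  classical
  unfold mfun
  exact Nat.le_findGreatest h2 h1

include h𝒜 hlim he in
lemma dfun_tendsto {A : Set ℕ} (hA : A ∈ 𝒜) :
    Tendsto (dfun f x e) (atTop ⊓ 𝓟 A) (𝓝 0) := by
  rw [Metric.tendsto_nhds]
  intro ε hε
  obtain ⟨M, hM⟩ := exists_pow_lt_of_lt_one hε (show (1/2:ℝ) < 1 by norm_num)
  filter_upwards [mfun_large f x e h𝒜 hlim he hA M] with n hn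
  rw [Real.dist_eq, sub_zero, abs_of_pos (dfun_pos f x e n)]
  calc dfun f x e n ≤ (1/2:ℝ)^M :=
        pow_le_pow_of_le_one (by norm_num) (by norm_num) hn
    _ < ε := hM

include h𝒜 hlim he in
lemma fmod_tendsto {A : Set ℕ} (hA : A ∈ 𝒜) :
    Tendsto (fmod f x e) (atTop ⊓ 𝓟 A) (𝓝 (x A)) := by
  rw [Metric.tendsto_nhds]
  intro ε hε
  have h1 := Metric.tendsto_nhds.mp (hlim A hA) (ε/2) (by linarith)
  have h2 := Metric.tendsto_nhds.mp (dfun_tendsto f x e h𝒜 hlim he hA) (ε/2) (by linarith)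
  filter_upwards [h1, h2] with n hn1 hn2
  rw [Real.dist_eq] at hn1 hn2 ⊢
  rw [sub_zero, abs_of_pos (dfun_pos f x e n)] at hn2
  calc |fmod f x e n - x A| ≤ |fmod f x e n - f n| + |f n - x A| := abs_sub_le _ _ _
    _ < ε/2 + ε/2 := add_lt_add_of_le_of_lt ((fmod_close f x e n).trans hn2.le) hn1
    _ = ε := by ring

include h𝒜 hlim he in
lemma fmod_eventually_eq {A : Set ℕ} (hA : A ∈ 𝒜) {k₀ : ℕ}
    (hk₀ : e k₀ = A) (hmin : ∀ j < k₀, e j ≠ A) :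
    ∀ᶠ n in atTop ⊓ 𝓟 A, fmod f x e n = x A := by
  -- (a) eventually avoid e j for j < k₀
  have ha : ∀ᶠ n in atTop ⊓ 𝓟 A, ∀ j ∈ Finset.range k₀, n ∉ e j := by
    rw [Filter.eventually_all_finset]
    intro j hj
    rcases he j with hj0 | hj1
    · filter_upwards with n hn
      rw [hj0] at hn
      exact absurd hn (Set.notMem_empty n)
    · have hfin : (A ∩ e j).Finite :=
        h𝒜.2.2 A hA (e j) hj1 (fun h => (hmin j (Finset.mem_range.mp hj) (h.symm ▸ rfl)).elim)
      rw [Filter.eventually_inf_principal]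
      filter_upwards [ev_notmem hfin] with n hn hnA hnej
      exact absurd ⟨hnA, hnej⟩ hn
  have hb := mfun_large f x e h𝒜 hlim he hA (k₀ + 1)
  have hc : ∀ᶠ n in atTop ⊓ 𝓟 A, n ∈ A := by
    rw [Filter.eventually_inf_principal]
    filter_upwards with n hn
    exact hn
  filter_upwards [ha, hb, hc] with n hna hnb hnc
  have hPg : Pg f x e n (mfun f x e n) := by
    have h0 : Pg f x e n 0 := fun k hk => absurd hk (Nat.not_lt_zero k)
    classical
    unfold mfun
    exact Nat.findGreatest_spec (Nat.zero_le n) h0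
  have hmem : n ∈ e k₀ := hk₀ ▸ hnc
  have hclose : |f n - x (e k₀)| < dfun f x e n := hPg k₀ hnb hmem
  have hcond : ∃ k, (n ∈ e k ∧ ∀ j < k, n ∉ e j) ∧ |f n - x (e k)| ≤ dfun f x e n :=
    ⟨k₀, ⟨hmem, fun j hj => hna j (Finset.mem_range.mpr hj)⟩, hclose.le⟩
  unfold fmod
  rw [dif_pos hcond]
  have hspec := hcond.choose_spec
  set k' := hcond.choose with hk'
  rcases Nat.lt_trichotomy k' k₀ with h | h | h
  · exact absurd hspec.1.1 (hna k' (Finset.mem_range.mpr h))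
  · rw [h, hk₀]
  · exact absurd hmem (hspec.1.2 k₀ h)

end withfam
end REmain

end


open REaux REaux2 REaux3 REaux4 REmain

theorem rEmbeddable_iff_rational_injective_version
    (𝒜 : Set (Set ℕ)) (h𝒜 : IsAlmostDisjointFamily 𝒜) :
    REmbeddable 𝒜 ↔
      ∃ (f : ℕ → ℝ) (x : Set ℕ → ℝ),
        Function.Injective f ∧ (∀ n : ℕ, ∃ q : ℚ, f n = (q : ℝ)) ∧
        (∀ A ∈ 𝒜, LimAlong A f (x A) ∧ Irrational (x A)) ∧
        Set.InjOn x 𝒜 := by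
  constructor
  · rintro ⟨f, x, hlim, hinj⟩
    classical
    set Bad : Set (Set ℕ) := {A | A ∈ 𝒜 ∧ ∃ q : ℚ, x A = (q : ℝ)} with hBadDef
    have hBadc : Bad.Countable := by
      apply Set.countable_of_injective_of_countable_image (hinj.mono (fun A hA => hA.1))
      apply Set.Countable.mono _ (Set.countable_range ((↑) : ℚ → ℝ))
      rintro - ⟨A, hA, rfl⟩
      obtain ⟨q, hq⟩ := hA.2
      exact ⟨q, hq.symm⟩
    obtain ⟨e, he⟩ := (hBadc.insert ∅).exists_eq_range ⟨∅, Set.mem_insert _ _⟩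
    have he' : ∀ k, e k = ∅ ∨ e k ∈ 𝒜 := by
      intro k
      have hk : e k ∈ insert (∅ : Set ℕ) Bad := he ▸ Set.mem_range_self k
      rcases Set.mem_insert_iff.mp hk with h | h
      · exact Or.inl h
      · exact Or.inr h.1
    set c : ℕ → ℝ := fun n => theta (fmod f x e n) with hcDef
    have htend : ∀ A ∈ 𝒜, Tendsto c (atTop ⊓ 𝓟 A) (𝓝 (theta (x A))) := by
      intro A hA
      by_cases hb : ∃ q : ℚ, x A = (q : ℝ)
      · have hAr : ∃ k, e k = A := by
          have : A ∈ insert (∅ : Set ℕ) Bad := Set.mem_insert_of_mem _ ⟨hA, hb⟩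
          rw [he] at this
          obtain ⟨k, hk⟩ := this
          exact ⟨k, hk⟩
        have hk₀ : e (Nat.find hAr) = A := Nat.find_spec hAr
        have hmin : ∀ j < Nat.find hAr, e j ≠ A := fun j hj => Nat.find_min hAr hj
        have hev := fmod_eventually_eq f x e h𝒜 hlim he' hA hk₀ hmin
        refine Tendsto.congr' ?_ (tendsto_const_nhds (x := theta (x A)))
        filter_upwards [hev] with n hn
        rw [hcDef]
        simp only [hn]
      · have hirr : Irrational (x A) := by
          rintro ⟨q, hq⟩
          exact hb ⟨q, hq.symm⟩
        exact (theta_continuousAt hirr).tendsto.comp (fmod_tendsto f x e h𝒜 hlim he' hA)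
    refine ⟨fun n => ((pickSeq c n : ℚ) : ℝ), fun A => theta (x A), ?_, ?_, ?_, ?_⟩
    · intro a b hab
      exact pickSeq_injective c (Rat.cast_injective (α := ℝ) hab)
    · exact fun n => ⟨pickSeq c n, rfl⟩
    · intro A hA
      refine ⟨?_, (theta_liouville (x A)).irrational⟩
      exact pickSeq_tendsto c inf_le_left (htend A hA)
    · intro A hA B hB h
      exact hinj hA hB (StrictMono.injective theta_strictMono h)
  · rintro ⟨f, x, _, _, h3, h4⟩
    exact ⟨f, x, fun A hA => (h3 A hA).1, h4⟩
end

section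
/- An almost disjoint family 𝒜 of infinite subsets of ℕ is ℝ-embeddable if and only if there exists a function g : ℕ → 2^ℕ into the Cantor space (the space {0,1}^ℕ with the product topology) such that for every A ∈ 𝒜 the limit y_A = lim_{n∈A} g(n) exists in 2^ℕ and y_A ≠ y_B for distinct A, B ∈ 𝒜. -/
open Filter Topology Set

noncomputable def cantorTerm (b : ℕ → Bool) (n : ℕ) : ℝ :=
  if b n then (3:ℝ)⁻¹ ^ n else 0

lemma cantorTerm_nonneg (b : ℕ → Bool) (n : ℕ) : 0 ≤ cantorTerm b n := by
  unfold cantorTerm; split <;> positivity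

lemma cantorTerm_le (b : ℕ → Bool) (n : ℕ) : cantorTerm b n ≤ (3:ℝ)⁻¹ ^ n := by
  unfold cantorTerm; split
  · exact le_refl _
  · positivity

lemma summable_third : Summable (fun n : ℕ => (3:ℝ)⁻¹ ^ n) :=
  summable_geometric_of_lt_one (by norm_num) (by norm_num)

lemma cantorTerm_summable (b : ℕ → Bool) : Summable (cantorTerm b) :=
  Summable.of_nonneg_of_le (cantorTerm_nonneg b) (cantorTerm_le b) summable_third

noncomputable def cantorEmb (b : ℕ → Bool) : ℝ := ∑' n, cantorTerm b n

lemma cantorEmb_continuous : Continuous cantorEmb := by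
  apply continuous_tsum (u := fun n : ℕ => (3:ℝ)⁻¹ ^ n)
    (f := fun n b => cantorTerm b n)
  · intro i
    have : (fun b : ℕ → Bool => cantorTerm b i) =
        (fun t : Bool => if t then (3:ℝ)⁻¹ ^ i else 0) ∘ (fun b : ℕ → Bool => b i) := rfl
    rw [this]
    exact continuous_of_discreteTopology.comp (continuous_apply i)
  · exact summable_third
  · intro n b
    rw [Real.norm_eq_abs, abs_of_nonneg (cantorTerm_nonneg b n)]
    exact cantorTerm_le b n

lemma tail_third (n : ℕ) : ∑' k : ℕ, (3:ℝ)⁻¹ ^ (k + (n+1)) = (3:ℝ)⁻¹ ^ n / 2 := by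
  have h : ∀ k : ℕ, (3:ℝ)⁻¹ ^ (k + (n+1)) = (3:ℝ)⁻¹ ^ (n+1) * (3:ℝ)⁻¹ ^ k := by
    intro k; rw [pow_add]; ring
  rw [tsum_congr h, tsum_mul_left, tsum_geometric_of_lt_one (by norm_num) (by norm_num),
    pow_succ]
  norm_num
  ring

lemma cantorEmb_lt (b c : ℕ → Bool) (n : ℕ) (hlt : ∀ k < n, b k = c k)
    (hb : b n = false) (hc : c n = true) : cantorEmb b < cantorEmb c := by
  have hd : Summable (fun k => cantorTerm c k - cantorTerm b k) :=
    (cantorTerm_summable c).sub (cantorTerm_summable b)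
  have key : cantorEmb c - cantorEmb b = ∑' k, (cantorTerm c k - cantorTerm b k) :=
    (Summable.tsum_sub (cantorTerm_summable c) (cantorTerm_summable b)).symm
  have hsplit := Summable.sum_add_tsum_nat_add (f := fun k => cantorTerm c k - cantorTerm b k) (n+1) hd
  have hfin : ∑ i ∈ Finset.range (n+1), (cantorTerm c i - cantorTerm b i) = (3:ℝ)⁻¹ ^ n := by
    rw [Finset.sum_range_succ, Finset.sum_eq_zero, zero_add]
    · simp only [cantorTerm]; rw [hb, hc]; simp
    · intro i hi
      simp only [cantorTerm]
      rw [hlt i (Finset.mem_range.mp hi)]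
      ring
  have htail : -((3:ℝ)⁻¹ ^ n / 2) ≤ ∑' k, (cantorTerm c (k + (n+1)) - cantorTerm b (k + (n+1))) := by
    have hsneg : Summable (fun k : ℕ => -((3:ℝ)⁻¹ ^ (k + (n+1)))) := by
      apply Summable.neg
      exact (summable_nat_add_iff (n+1)).mpr summable_third
    have h1 : ∑' k : ℕ, -((3:ℝ)⁻¹ ^ (k + (n+1))) ≤
        ∑' k, (cantorTerm c (k + (n+1)) - cantorTerm b (k + (n+1))) := by
      apply Summable.tsum_le_tsum _ hsneg ((summable_nat_add_iff (n+1)).mpr hd)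
      intro k
      have h2 := cantorTerm_le b (k + (n+1))
      have h3 := cantorTerm_nonneg c (k + (n+1))
      linarith
    calc -((3:ℝ)⁻¹ ^ n / 2) = ∑' k : ℕ, -((3:ℝ)⁻¹ ^ (k + (n+1))) := by
          rw [tsum_neg, tail_third]
      _ ≤ _ := h1
  have hpos : (0:ℝ) < (3:ℝ)⁻¹ ^ n / 2 := by positivity
  have hge : cantorEmb c - cantorEmb b ≥ (3:ℝ)⁻¹ ^ n / 2 := by
    rw [key, ← hsplit, hfin]
    linarith
  linarith

lemma cantorEmb_injective : Function.Injective cantorEmb := by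
  intro b c h
  by_contra hne
  have hex : ∃ n, b n ≠ c n := Function.ne_iff.mp hne
  classical
  set n := Nat.find hex with hn
  have hne_n : b n ≠ c n := Nat.find_spec hex
  have hlt : ∀ k < n, b k = c k := by
    intro k hk
    by_contra hk'
    have := Nat.find_le (h := hex) hk'
    omega
  cases hb : b n with
  | false =>
    cases hc : c n with
    | false => exact hne_n (hb.trans hc.symm)
    | true => exact absurd h (ne_of_lt (cantorEmb_lt b c n hlt hb hc))
  | true =>
    cases hc : c n with
    | false => exact absurd h.symm (ne_of_lt (cantorEmb_lt c b n (fun k hk => (hlt k hk).symm) hc hb))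
    | true => exact hne_n (hb.trans hc.symm)

theorem rEmbeddable_iff_cantor_version
    (𝒜 : Set (Set ℕ)) (h𝒜 : IsAlmostDisjointFamily 𝒜) :
    REmbeddable 𝒜 ↔
      ∃ (g : ℕ → (ℕ → Bool)) (y : Set ℕ → (ℕ → Bool)),
        (∀ A ∈ 𝒜, LimAlong A g (y A)) ∧ Set.InjOn y 𝒜 := by
  constructor
  · rintro ⟨f, x, hlim, hinj⟩
    classical
    set q : ℕ → ℚ := fun k => (Denumerable.eqv ℚ).symm k with hq
    set S : ℕ → Set ℕ := fun k =>
      if h : ∃ A ∈ 𝒜, x A = (q k : ℝ) then h.choose else ∅ with hS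
    refine ⟨fun m k => if m ∈ S k then true else decide (f m < (q k : ℝ)),
      fun A k => if x A = (q k : ℝ) then true else decide (x A < (q k : ℝ)), ?_, ?_⟩
    · intro A hA
      rw [LimAlong, tendsto_pi_nhds]
      intro k
      apply tendsto_nhds_of_eventually_eq
      have hmemA : ∀ᶠ m in atTop ⊓ 𝓟 A, m ∈ A :=
        eventually_inf_principal.mpr (Eventually.of_forall fun m hm => hm)
      by_cases hxA : x A = (q k : ℝ)
      · have hex : ∃ B ∈ 𝒜, x B = (q k : ℝ) := ⟨A, hA, hxA⟩
        have hSk : S k = hex.choose := by rw [hS]; exact dif_pos hex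
        obtain ⟨hmem, hxeq⟩ := hex.choose_spec
        have hSA : S k = A := by
          rw [hSk]
          exact hinj hmem hA (by rw [hxeq, hxA])
        simp only [if_pos hxA]
        filter_upwards [hmemA] with m hm
        rw [hSA, if_pos hm]
      · have hnot : ∀ᶠ m in atTop ⊓ 𝓟 A, m ∉ S k := by
          by_cases hex : ∃ B ∈ 𝒜, x B = (q k : ℝ)
          · have hSk : S k = hex.choose := by rw [hS]; exact dif_pos hex
            obtain ⟨hmem, hxeq⟩ := hex.choose_spec
            have hne : hex.choose ≠ A := fun he => hxA (he ▸ hxeq)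
            have hfin : (A ∩ hex.choose).Finite :=
              h𝒜.2.2 A hA _ hmem (fun he => hne he.symm)
            have h1 : ∀ᶠ m in atTop, m ∉ (A ∩ hex.choose) := by
              rw [← Nat.cofinite_eq_atTop]
              exact hfin.eventually_cofinite_notMem
            filter_upwards [h1.filter_mono inf_le_left, hmemA] with m hm1 hm2
            rw [hSk]
            exact fun hs => hm1 ⟨hm2, hs⟩
          · have hSk : S k = ∅ := by rw [hS]; exact dif_neg hex
            filter_upwards with m
            rw [hSk]
            exact notMem_empty m
        simp only [if_neg hxA]
        rcases lt_or_gt_of_ne hxA with hlt | hgt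
        · have hev := (hlim A hA).eventually_lt_const hlt
          filter_upwards [hnot, hev] with m h1 h2
          rw [if_neg h1]
          simp [h2, hlt]
        · have hev := (hlim A hA).eventually_const_lt hgt
          filter_upwards [hnot, hev] with m h1 h2
          rw [if_neg h1]
          simp [not_lt.mpr h2.le, not_lt.mpr hgt.le]
    · intro A hA B hB hyAB
      by_contra hne
      have hxne : x A ≠ x B := fun he => hne (hinj hA hB he)
      have key : ∀ C D, C ∈ 𝒜 → D ∈ 𝒜 → x C < x D →
          (fun (E : Set ℕ) (k : ℕ) =>
            if x E = (q k : ℝ) then true else decide (x E < (q k : ℝ))) C ≠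
          (fun (E : Set ℕ) (k : ℕ) =>
            if x E = (q k : ℝ) then true else decide (x E < (q k : ℝ))) D := by
        intro C D hC hD hlt hcontr
        obtain ⟨r, hr1, hr2⟩ := exists_rat_btwn hlt
        set k := (Denumerable.eqv ℚ) r with hk
        have hqk : (q k : ℝ) = (r : ℝ) := by
          rw [hq]; simp [hk]
        have h1 : (if x C = (q k : ℝ) then true else decide (x C < (q k : ℝ))) =
            (if x D = (q k : ℝ) then true else decide (x D < (q k : ℝ))) :=
          congrFun hcontr k
        rw [if_neg (by rw [hqk]; exact ne_of_lt hr1),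
          if_neg (by rw [hqk]; exact ne_of_gt hr2)] at h1
        rw [hqk] at h1
        simp [hr1, not_lt.mpr hr2.le] at h1
      rcases hxne.lt_or_gt with hlt | hlt
      · exact key A B hA hB hlt hyAB
      · exact key B A hB hA hlt hyAB.symm
  · rintro ⟨g, y, hlim, hinj⟩
    exact ⟨cantorEmb ∘ g, cantorEmb ∘ y,
      fun A hA => (cantorEmb_continuous.tendsto (y A)).comp (hlim A hA),
      fun A hA B hB h => hinj hA hB (cantorEmb_injective h)⟩
end

section
/- If 𝒜 is an ℝ-embeddable almost disjoint family of infinite subsets of ℕ, then there is a function f : ℕ → ℝ such that for every A ∈ 𝒜 the limit x_A = lim_{n∈A} f(n) exists, x_A ≠ x_B for distinct A, B ∈ 𝒜, and moreover the complement ℝ \ {x_A : A ∈ 𝒜} of the set of limits is dense in ℝ. -/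
open Filter Topology Set

noncomputable section ADFaux

def cR : ℕ → ℝ := fun k => ((Denumerable.eqv ℚ).symm k : ℚ)

lemma cR_inj : Function.Injective cR := by
  intro a b hab
  have : ((Denumerable.eqv ℚ).symm a : ℚ) = (Denumerable.eqv ℚ).symm b := by
    unfold cR at hab
    exact_mod_cast hab
  exact (Denumerable.eqv ℚ).symm.injective this

lemma cR_dense {a b : ℝ} (h : a < b) : ∃ k, a < cR k ∧ cR k < b := by
  obtain ⟨q, hq1, hq2⟩ := exists_rat_btwn h
  refine ⟨(Denumerable.eqv ℚ) q, ?_, ?_⟩ <;> simp [cR, hq1, hq2]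

def wgt (k : ℕ) : ℝ := (2/3) * (1/3)^k

lemma wgt_pos (k : ℕ) : 0 < wgt k := by
  unfold wgt; positivity

lemma summable_wgt : Summable wgt :=
  (summable_geometric_of_lt_one (by norm_num) (by norm_num)).mul_left _

lemma summable_ite (p : ℕ → Prop) [DecidablePred p] :
    Summable (fun j => if p j then wgt j else 0) := by
  refine Summable.of_nonneg_of_le (fun j => ?_) (fun j => ?_) summable_wgt
  · split <;> [exact (wgt_pos j).le; rfl]
  · split <;> [rfl; exact (wgt_pos j).le]

def phi (t : ℝ) : ℝ := ∑' k, if cR k < t then wgt k else 0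

def sv (k : ℕ) : ℝ := phi (cR k) + wgt k / 2

lemma phi_mono : Monotone phi := by
  intro t u htu
  refine Summable.tsum_le_tsum (fun j => ?_) (summable_ite _) (summable_ite _)
  by_cases hj : cR j < t
  · simp [hj, hj.trans_le htu]
  · simp only [hj, if_false]
    split <;> [exact (wgt_pos j).le; rfl]

lemma phi_gap {k : ℕ} {t : ℝ} (h : cR k < t) : phi (cR k) + wgt k ≤ phi t := by
  have hsum1 : Summable fun j => if cR j < cR k then wgt j else 0 := summable_ite _
  have hsum2 : Summable fun j : ℕ => if j = k then wgt k else 0 := ⟨_, hasSum_ite_eq k (wgt k)⟩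
  have key : ∀ j, (if cR j < cR k then wgt j else 0) + (if j = k then wgt k else 0)
      ≤ (if cR j < t then wgt j else 0) := by
    intro j
    rcases eq_or_ne j k with rfl | hj
    · simp [h, lt_irrefl]
    · by_cases hjk : cR j < cR k
      · simp [hj, hjk, hjk.trans h]
      · simp only [hj, hjk, if_false, add_zero]
        split <;> [exact (wgt_pos j).le; rfl]
  calc phi (cR k) + wgt k
      = ∑' j, ((if cR j < cR k then wgt j else 0) + (if j = k then wgt k else 0)) := by
        rw [Summable.tsum_add hsum1 hsum2, tsum_ite_eq]; rfl
    _ ≤ phi t := Summable.tsum_le_tsum key (hsum1.add hsum2) (summable_ite _)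

lemma phi_strictMono : StrictMono phi := by
  intro t u htu
  obtain ⟨k, hk1, hk2⟩ := cR_dense htu
  calc phi t ≤ phi (cR k) := phi_mono hk1.le
    _ < phi (cR k) + wgt k := by linarith [wgt_pos k]
    _ ≤ phi u := phi_gap hk2

lemma wgt_tail (m : ℕ) : (∑' j, if m < j then wgt j else 0) ≤ (1/3 : ℝ)^(m+1) := by
  have hs : Summable (fun j => if m < j then wgt j else 0) := summable_ite _
  have h0 : (∑ i ∈ Finset.range (m+1), if m < i then wgt i else 0) = 0 := by
    apply Finset.sum_eq_zero
    intro i hi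
    rw [Finset.mem_range] at hi
    simp [Nat.not_lt.mpr (Nat.lt_succ_iff.mp hi)]
  have hkey := Summable.sum_add_tsum_nat_add (f := fun j => if m < j then wgt j else 0) (m+1) hs
  rw [h0, zero_add] at hkey
  have h1 : ∀ i : ℕ, (if m < i + (m+1) then wgt (i + (m+1)) else 0)
      = ((2/3) * (1/3)^(m+1)) * (1/3)^i := by
    intro i
    rw [if_pos (by omega)]
    unfold wgt
    rw [pow_add]
    ring
  rw [← hkey]
  rw [tsum_congr h1, tsum_mul_left, tsum_geometric_of_lt_one (by norm_num) (by norm_num)]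
  rw [show ((1:ℝ) - 1/3)⁻¹ = 3/2 by norm_num]
  ring_nf
  exact le_refl _


lemma phi_diff_le {t u : ℝ} (m : ℕ) (h1 : t ≤ u)
    (h2 : ∀ j ≤ m, ¬(t ≤ cR j ∧ cR j < u)) : phi u - phi t ≤ (1/3 : ℝ)^(m+1) := by
  have heq : phi u - phi t
      = ∑' j, ((if cR j < u then wgt j else 0) - (if cR j < t then wgt j else 0)) :=
    (Summable.tsum_sub (summable_ite _) (summable_ite _)).symm
  rw [heq]
  refine le_trans (Summable.tsum_le_tsum (fun j => ?_) ((summable_ite _).sub (summable_ite _))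
    (summable_ite _)) (wgt_tail m)
  by_cases hjt : cR j < t
  · rw [if_pos hjt, if_pos (hjt.trans_le h1), sub_self]
    split <;> [exact (wgt_pos j).le; rfl]
  · by_cases hju : cR j < u
    · have hm : m < j := by
        by_contra hle
        exact h2 j (Nat.not_lt.mp hle) ⟨not_lt.mp hjt, hju⟩
      rw [if_neg hjt, if_pos hju, if_pos hm, sub_zero]
    · rw [if_neg hjt, if_neg hju, sub_self]
      split <;> [exact (wgt_pos j).le; rfl]

lemma pow_third_le {m k : ℕ} (h : m ≤ k) : (1/3 : ℝ)^k ≤ (1/3)^m :=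
  pow_le_pow_of_le_one (by norm_num) (by norm_num) h

lemma phi_cont {t : ℝ} (ht : ∀ k, cR k ≠ t) {ε : ℝ} (hε : 0 < ε) :
    ∃ δ > 0, ∀ u, |u - t| < δ → |phi u - phi t| < ε := by
  obtain ⟨m, hm⟩ := exists_pow_lt_of_lt_one hε (by norm_num : (1/3:ℝ) < 1)
  set F : Finset ℝ := insert 1 ((Finset.range (m+1)).image (fun j => |cR j - t|)) with hF
  have hFne : F.Nonempty := ⟨1, Finset.mem_insert_self _ _⟩
  set δ := F.min' hFne with hδdef
  have hδpos : 0 < δ := by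
    rw [hδdef, Finset.lt_min'_iff]
    intro b hb
    rcases Finset.mem_insert.mp hb with rfl | hb
    · norm_num
    · obtain ⟨j, _, rfl⟩ := Finset.mem_image.mp hb
      exact abs_pos.mpr (sub_ne_zero.mpr (ht j))
  have hδle : ∀ j ≤ m, δ ≤ |cR j - t| := fun j hj =>
    Finset.min'_le _ _ (Finset.mem_insert_of_mem
      (Finset.mem_image_of_mem _ (Finset.mem_range.mpr (Nat.lt_succ_of_le hj))))
  have hbound : (1/3 : ℝ)^(m+1) < ε :=
    lt_of_le_of_lt (pow_third_le (Nat.le_succ m)) hm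
  refine ⟨δ, hδpos, fun u hu => ?_⟩
  rcases le_total t u with htu | hut
  · have hd : phi u - phi t ≤ (1/3)^(m+1) := by
      refine phi_diff_le m htu (fun j hj => ?_)
      rintro ⟨hj1, hj2⟩
      have : |cR j - t| < δ :=
        lt_of_le_of_lt (by rw [abs_of_nonneg (sub_nonneg.mpr hj1)]
                           calc cR j - t ≤ u - t := by linarith
                             _ ≤ |u - t| := le_abs_self _) hu
      exact absurd this (not_lt.mpr (hδle j hj))
    rw [abs_of_nonneg (sub_nonneg.mpr (phi_mono htu))]
    exact lt_of_le_of_lt hd hbound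
  · have hd : phi t - phi u ≤ (1/3)^(m+1) := by
      refine phi_diff_le m hut (fun j hj => ?_)
      rintro ⟨hj1, hj2⟩
      have : |cR j - t| < δ := by
        rw [abs_of_nonpos (by linarith)]
        calc -(cR j - t) = t - cR j := by ring
          _ ≤ t - u := by linarith
          _ ≤ |u - t| := by rw [abs_sub_comm]; exact le_abs_self _
          _ < δ := hu
      exact absurd this (not_lt.mpr (hδle j hj))
    rw [abs_of_nonpos (sub_nonpos.mpr (phi_mono hut)), neg_sub]
    exact lt_of_le_of_lt hd hbound

lemma free_point {k : ℕ} {y : ℝ} (h1 : phi (cR k) < y) (h2 : y < sv k) :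
    y ∉ range phi ∪ range sv := by
  have hswk : sv k < phi (cR k) + wgt k := by
    unfold sv; linarith [wgt_pos k]
  rintro (⟨t, rfl⟩ | ⟨j, rfl⟩)
  · rcases le_or_gt t (cR k) with h | h
    · exact absurd (phi_mono h) (not_le.mpr h1)
    · exact absurd (phi_gap h) (not_le.mpr (by linarith))
  · rcases lt_trichotomy (cR j) (cR k) with h | h | h
    · have := phi_gap h
      have : sv j < phi (cR k) := by unfold sv at *; linarith [wgt_pos j]
      linarith
    · exact absurd h2 (not_lt.mpr (le_of_eq (by rw [cR_inj h])))
    · have := phi_gap h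
      have : sv k < sv j := by unfold sv at *; linarith [wgt_pos j]
      linarith

lemma phi_ne_sv (t : ℝ) (j : ℕ) : phi t ≠ sv j := by
  intro h
  rcases le_or_gt t (cR j) with hle | hlt
  · have := phi_mono hle
    unfold sv at h; linarith [wgt_pos j]
  · have := phi_gap hlt
    unfold sv at h; linarith [wgt_pos j]

lemma sv_inj : Function.Injective sv := by
  intro j k hjk
  by_contra hne
  rcases lt_trichotomy (cR j) (cR k) with h | h | h
  · have := phi_gap h
    unfold sv at hjk; have := wgt_pos j; have := wgt_pos k; linarith
  · exact hne (cR_inj h)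
  · have := phi_gap h
    unfold sv at hjk; have := wgt_pos j; have := wgt_pos k; linarith

lemma dense_compl_ranges : Dense ((range phi ∪ range sv)ᶜ) := by
  rw [Metric.dense_iff]
  intro x ε hε
  by_cases hx : x ∈ range phi ∪ range sv
  swap
  · exact ⟨x, Metric.mem_ball_self hε, hx⟩
  rcases hx with ⟨t, rfl⟩ | ⟨k, rfl⟩
  · -- x = phi t
    obtain ⟨m, hm⟩ := exists_pow_lt_of_lt_one hε (by norm_num : (1/3:ℝ) < 1)
    set F : Finset ℝ := insert 1 (((Finset.range (m+1)).filter (fun j => cR j < t)).image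
      (fun j => t - cR j)) with hF
    have hFne : F.Nonempty := ⟨1, Finset.mem_insert_self _ _⟩
    set δ := F.min' hFne with hδdef
    have hδpos : 0 < δ := by
      rw [hδdef, Finset.lt_min'_iff]
      intro b hb
      rcases Finset.mem_insert.mp hb with rfl | hb
      · norm_num
      · obtain ⟨j, hj, rfl⟩ := Finset.mem_image.mp hb
        rw [Finset.mem_filter] at hj
        linarith [hj.2]
    obtain ⟨k, hk1, hk2⟩ := cR_dense (show t - δ < t by linarith)
    have hδle : ∀ j ≤ m, cR j < t → δ ≤ t - cR j := fun j hj hjt =>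
      Finset.min'_le _ _ (Finset.mem_insert_of_mem (Finset.mem_image_of_mem _
        (Finset.mem_filter.mpr ⟨Finset.mem_range.mpr (Nat.lt_succ_of_le hj), hjt⟩)))
    have hkm : m < k := by
      by_contra hle
      have := hδle k (Nat.not_lt.mp hle) hk2
      linarith
    have hdiff : phi t - phi (cR k) ≤ (1/3)^(m+1) := by
      refine phi_diff_le m hk2.le (fun j hj => ?_)
      rintro ⟨hj1, hj2⟩
      have := hδle j hj hj2
      linarith
    have hfree : phi (cR k) + wgt k / 4 ∉ range phi ∪ range sv :=
      free_point (k := k) (by linarith [wgt_pos k]) (by unfold sv; linarith [wgt_pos k])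
    refine ⟨phi (cR k) + wgt k / 4, ?_, hfree⟩
    rw [Metric.mem_ball, Real.dist_eq]
    have hgap := phi_gap hk2
    have habs : |phi (cR k) + wgt k / 4 - phi t| = phi t - (phi (cR k) + wgt k / 4) := by
      rw [abs_of_nonpos (by linarith [wgt_pos k])]; ring
    rw [habs]
    calc phi t - (phi (cR k) + wgt k / 4) < phi t - phi (cR k) := by linarith [wgt_pos k]
      _ ≤ (1/3)^(m+1) := hdiff
      _ ≤ (1/3)^m := pow_third_le (Nat.le_succ m)
      _ < ε := hm
  · -- x = sv k
    have h1 : 0 < min ε (wgt k / 2) := lt_min hε (by linarith [wgt_pos k])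
    have h2 : min ε (wgt k / 2) ≤ wgt k / 2 := min_le_right _ _
    have hfree : sv k - min ε (wgt k / 2) / 2 ∉ range phi ∪ range sv :=
      free_point (k := k) (by unfold sv; linarith) (by linarith)
    refine ⟨sv k - min ε (wgt k / 2) / 2, ?_, hfree⟩
    rw [Metric.mem_ball, Real.dist_eq]
    have h3 : min ε (wgt k / 2) ≤ ε := min_le_left _ _
    rw [abs_of_nonpos (by linarith)]
    linarith


lemma ev_notin {B A : Set ℕ} (hfin : (B ∩ A).Finite) :
    ∀ᶠ n in atTop ⊓ 𝓟 B, n ∉ A := by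
  obtain ⟨N, hN⟩ := hfin.bddAbove
  rw [eventually_inf_principal]
  filter_upwards [eventually_gt_atTop N] with n hn hnB hnA
  exact absurd (hN ⟨hnB, hnA⟩) (not_le.mpr hn)

theorem rEmbeddable_with_dense_complement_of_limits
    (𝒜 : Set (Set ℕ)) (h𝒜 : IsAlmostDisjointFamily 𝒜) (h : REmbeddable 𝒜) :
    ∃ (f : ℕ → ℝ) (x : Set ℕ → ℝ),
      (∀ A ∈ 𝒜, LimAlong A f (x A)) ∧ Set.InjOn x 𝒜 ∧
      Dense ((x '' 𝒜)ᶜ) := by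
  classical
  obtain ⟨f, x, hlim, hinj⟩ := h
  obtain ⟨-, -, hAD⟩ := h𝒜
  set bad : ℕ → Prop := fun k => ∃ A ∈ 𝒜, x A = cR k with hbad_def
  set AA : ℕ → Set ℕ := fun k => if hk : bad k then hk.choose else ∅ with hAA_def
  have hAA : ∀ k, bad k → AA k ∈ 𝒜 ∧ x (AA k) = cR k := by
    intro k hk
    rw [hAA_def]
    simp only [dif_pos hk]
    exact ⟨hk.choose_spec.1, hk.choose_spec.2⟩
  set g : ℕ → ℝ := fun n =>
    if hn : ∃ k, bad k ∧ n ∈ AA k ∧ |f n - cR k| < (1/3)^k then sv (Nat.find hn)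
    else phi (f n) with hg_def
  set x' : Set ℕ → ℝ := fun B =>
    if hB : ∃ k, x B = cR k then sv (Nat.find hB) else phi (x B) with hx'_def
  -- eventually, points of B avoid the relevant AA j's (other than B itself)
  have hev2 : ∀ B, B ∈ 𝒜 → ∀ m : ℕ,
      ∀ᶠ n in atTop ⊓ 𝓟 B, ∀ j ≤ m, ¬(bad j ∧ AA j ≠ B ∧ n ∈ AA j) := by
    intro B hB m
    have : ∀ᶠ n in atTop ⊓ 𝓟 B, ∀ j ∈ Set.Iic m, ¬(bad j ∧ AA j ≠ B ∧ n ∈ AA j) := by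
      rw [eventually_all_finite (Set.finite_Iic m)]
      intro j _
      by_cases hbj : bad j
      · by_cases hne : AA j ≠ B
        · have hfin : (B ∩ AA j).Finite := hAD B hB (AA j) (hAA j hbj).1 (Ne.symm hne)
          filter_upwards [ev_notin hfin] with n hn
          exact fun hc => hn hc.2.2
        · exact Eventually.of_forall fun n hc => hne hc.2.1
      · exact Eventually.of_forall fun n hc => hbj hc.1
    filter_upwards [this] with n hn j hj
    exact hn j hj
  have hevB : ∀ B : Set ℕ, ∀ᶠ n in atTop ⊓ 𝓟 B, n ∈ B := fun B =>
    eventually_inf_principal.mpr (Eventually.of_forall fun n hn => hn)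
  refine ⟨g, x', ?_, ?_, ?_⟩
  · -- the limits exist
    intro B hB
    unfold LimAlong
    by_cases hgood : ∃ k, x B = cR k
    · -- "bad" member with rational limit: new limit is sv k
      set k := Nat.find hgood with hk_def
      have hxB : x B = cR k := Nat.find_spec hgood
      have hx'B : x' B = sv k := by rw [hx'_def]; exact dif_pos hgood
      have hbadk : bad k := ⟨B, hB, hxB⟩
      have hBA : B = AA k :=
        hinj hB (hAA k hbadk).1 (hxB.trans (hAA k hbadk).2.symm)
      have hfB : Tendsto f (atTop ⊓ 𝓟 B) (𝓝 (cR k)) := hxB ▸ hlim B hB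
      have ev1 : ∀ᶠ n in atTop ⊓ 𝓟 B, |f n - cR k| < (1/3)^k := by
        have := Metric.tendsto_nhds.mp hfB ((1/3)^k) (by positivity)
        simpa [Real.dist_eq] using this
      have hevk : ∀ᶠ n in atTop ⊓ 𝓟 B, g n = sv k := by
        filter_upwards [ev1, hev2 B hB k, hevB B] with n h1 h2 h3
        have hex : ∃ k', bad k' ∧ n ∈ AA k' ∧ |f n - cR k'| < (1/3)^k' :=
          ⟨k, hbadk, hBA ▸ h3, h1⟩
        have hfind : Nat.find hex = k := by
          have hle : Nat.find hex ≤ k := Nat.find_le ⟨hbadk, hBA ▸ h3, h1⟩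
          rcases lt_or_eq_of_le hle with hlt | heq
          · exfalso
            have hspec := Nat.find_spec hex
            have hAAne : AA (Nat.find hex) ≠ B := by
              intro heq'
              have : x B = cR (Nat.find hex) := by
                rw [← heq']; exact (hAA _ hspec.1).2
              exact Nat.find_min hgood hlt this
            exact h2 (Nat.find hex) hlt.le ⟨hspec.1, hAAne, hspec.2.1⟩
          · exact heq
        rw [hg_def]
        simp only [dif_pos hex]
        rw [hfind]
      rw [hx'B]
      exact Tendsto.congr' (EventuallyEq.symm hevk) tendsto_const_nhds
    · -- "good" member with irrational limit: new limit is phi (x B)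
      have hx'B : x' B = phi (x B) := by rw [hx'_def]; exact dif_neg hgood
      rw [hx'B, Metric.tendsto_nhds]
      intro ε hε
      have hirr : ∀ k, cR k ≠ x B := fun k hk => hgood ⟨k, hk.symm⟩
      obtain ⟨δ, hδpos, hδ⟩ := phi_cont hirr (half_pos hε)
      obtain ⟨m, hm⟩ := exists_pow_lt_of_lt_one
        (lt_min (half_pos hδpos) (half_pos hε)) (by norm_num : (1/3:ℝ) < 1)
      have hmδ : (1/3:ℝ)^m < δ/2 := lt_of_lt_of_le hm (min_le_left _ _)
      have hmε : (1/3:ℝ)^m < ε/2 := lt_of_lt_of_le hm (min_le_right _ _)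
      have ev1 : ∀ᶠ n in atTop ⊓ 𝓟 B, |f n - x B| < δ/2 := by
        have := Metric.tendsto_nhds.mp (hlim B hB) (δ/2) (half_pos hδpos)
        simpa [Real.dist_eq] using this
      filter_upwards [ev1, hev2 B hB m] with n h1 h2
      rw [hg_def]
      by_cases hex : ∃ k', bad k' ∧ n ∈ AA k' ∧ |f n - cR k'| < (1/3)^k'
      · simp only [dif_pos hex]
        have hspec := Nat.find_spec hex
        set k₀ := Nat.find hex with hk₀
        have hk₀m : m < k₀ := by
          by_contra hle
          have hAAne : AA k₀ ≠ B := fun heq =>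
            hgood ⟨k₀, by rw [← heq]; exact (hAA k₀ hspec.1).2⟩
          exact h2 k₀ (Nat.not_lt.mp hle) ⟨hspec.1, hAAne, hspec.2.1⟩
        have hpw : (1/3:ℝ)^k₀ ≤ (1/3)^m := pow_third_le hk₀m.le
        have hcd : |cR k₀ - x B| < δ := by
          calc |cR k₀ - x B| ≤ |cR k₀ - f n| + |f n - x B| := abs_sub_le _ _ _
            _ = |f n - cR k₀| + |f n - x B| := by rw [abs_sub_comm]
            _ < (1/3)^k₀ + δ/2 := by linarith [hspec.2.2]
            _ ≤ (1/3)^m + δ/2 := by linarith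
            _ < δ := by linarith
        have hphic : |phi (cR k₀) - phi (x B)| < ε/2 := hδ (cR k₀) hcd
        rw [Real.dist_eq]
        have hwk : wgt k₀ / 2 ≤ (1/3:ℝ)^m := by
          have : wgt k₀ / 2 ≤ wgt k₀ := by linarith [wgt_pos k₀]
          have h2' : wgt k₀ ≤ (1/3:ℝ)^k₀ := by
            unfold wgt
            nlinarith [pow_pos (show (0:ℝ) < 1/3 by norm_num) k₀]
          linarith
        have habs : |sv k₀ - phi (x B)| ≤ wgt k₀ / 2 + |phi (cR k₀) - phi (x B)| := by
          have := abs_add_le (wgt k₀ / 2) (phi (cR k₀) - phi (x B))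
          have heq2 : sv k₀ - phi (x B) = wgt k₀ / 2 + (phi (cR k₀) - phi (x B)) := by
            unfold sv; ring
          rw [heq2]
          calc |wgt k₀ / 2 + (phi (cR k₀) - phi (x B))|
              ≤ |wgt k₀ / 2| + |phi (cR k₀) - phi (x B)| := this
            _ = wgt k₀ / 2 + |phi (cR k₀) - phi (x B)| := by
                rw [abs_of_pos (by linarith [wgt_pos k₀])]
        linarith
      · simp only [dif_neg hex]
        rw [Real.dist_eq]
        have := hδ (f n) (by linarith)
        linarith
  · -- injectivity
    intro A hA B hB hxy
    rw [hx'_def] at hxy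
    by_cases hA' : ∃ k, x A = cR k <;> by_cases hB' : ∃ k, x B = cR k
    · simp only [dif_pos hA', dif_pos hB'] at hxy
      have hk := sv_inj hxy
      exact hinj hA hB (by rw [Nat.find_spec hA', Nat.find_spec hB', hk])
    · simp only [dif_pos hA', dif_neg hB'] at hxy
      exact absurd hxy.symm (phi_ne_sv _ _)
    · simp only [dif_neg hA', dif_pos hB'] at hxy
      exact absurd hxy (phi_ne_sv _ _)
    · simp only [dif_neg hA', dif_neg hB'] at hxy
      exact hinj hA hB (phi_strictMono.injective hxy)
  · -- dense complement
    have hsub : x' '' 𝒜 ⊆ range phi ∪ range sv := by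
      rintro _ ⟨B, -, rfl⟩
      by_cases hB' : ∃ k, x B = cR k
      · refine Or.inr ⟨Nat.find hB', ?_⟩
        simp only [hx'_def, dif_pos hB']
      · refine Or.inl ⟨x B, ?_⟩
        simp only [hx'_def, dif_neg hB']
    exact Dense.mono (compl_subset_compl.mpr hsub) dense_compl_ranges

end ADFaux
end

section
/- Let T ⊆ 2^{<ω} be a subtree of the full binary tree, let Z be a set of infinite branches of T, and let 𝒜 = {A_r : r ∈ Z} be an almost disjoint family of infinite subsets of ℕ indexed injectively by Z. Suppose there is a family {B_s : s ∈ T} of infinite subsets of ℕ with the following properties: (1) for every t ∈ T, B_t = ⋃{B_{t⌢i} : i ∈ {0,1} and t⌢i ∈ T}; (2) B_s ∩ B_t is finite whenever s, t ∈ T are incomparable (neither extends the other); (3) A_r ⊆ ⋂_{n∈ω} B_{r↾n} for every r ∈ Z. Then 𝒜 is ℝ-embeddable. -/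
open Filter Topology Set

open Cardinal

lemma cantorAux_bounds {c : ℝ} (h0 : 0 ≤ c) (f : ℕ → Bool) (n : ℕ) :
    0 ≤ cantorFunctionAux c f n ∧ cantorFunctionAux c f n ≤ c ^ n := by
  cases h : f n <;> simp [cantorFunctionAux, h, pow_nonneg h0]

lemma cantor_dist_le {c : ℝ} (h0 : 0 ≤ c) (h1 : c < 1) {f g : ℕ → Bool} {m : ℕ}
    (h : ∀ i < m, f i = g i) :
    |cantorFunction c f - cantorFunction c g| ≤ c ^ m / (1 - c) := by
  have sf := summable_cantor_function f h0 h1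
  have sg := summable_cantor_function g h0 h1
  have key : ∀ n, |cantorFunctionAux c f n - cantorFunctionAux c g n|
      ≤ (if n < m then 0 else c ^ n) := by
    intro n
    by_cases hn : n < m
    · simp [hn, cantorFunctionAux_eq (h n hn)]
    · rw [if_neg hn]
      have hf := cantorAux_bounds h0 f n
      have hg := cantorAux_bounds h0 g n
      rw [abs_sub_le_iff]
      constructor <;> linarith [hf.1, hf.2, hg.1, hg.2]
  have sbound : Summable (fun n => if n < m then (0:ℝ) else c ^ n) := by
    apply (summable_geometric_of_lt_one h0 h1).summable_of_eq_zero_or_self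
    intro n; split
    · exact Or.inl rfl
    · exact Or.inr rfl
  have sabs : Summable (fun n => |cantorFunctionAux c f n - cantorFunctionAux c g n|) :=
    Summable.of_nonneg_of_le (fun n => abs_nonneg _) key sbound
  calc |cantorFunction c f - cantorFunction c g|
      = |∑' n, (cantorFunctionAux c f n - cantorFunctionAux c g n)| := by
        rw [cantorFunction, cantorFunction, Summable.tsum_sub sf sg]
    _ ≤ ∑' n, |cantorFunctionAux c f n - cantorFunctionAux c g n| := by
        have hnorm : Summable (fun n => ‖cantorFunctionAux c f n - cantorFunctionAux c g n‖) := by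
          simpa only [Real.norm_eq_abs] using sabs
        have hts := norm_tsum_le_tsum_norm hnorm
        simpa only [Real.norm_eq_abs] using hts
    _ ≤ ∑' n, (if n < m then (0:ℝ) else c ^ n) :=
        Summable.tsum_le_tsum key sabs sbound
    _ = c ^ m / (1 - c) := by
        rw [← Summable.sum_add_tsum_nat_add m sbound]
        have e1 : ∀ i ∈ Finset.range m, (if i < m then (0:ℝ) else c ^ i) = 0 := by
          intro i hi; simp [Finset.mem_range.mp hi]
        rw [Finset.sum_congr rfl e1]
        have e2 : (fun n => if n + m < m then (0:ℝ) else c ^ (n + m))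
            = fun n => c ^ m * c ^ n := by
          funext n; rw [if_neg (by omega)]; rw [pow_add, mul_comm]
        rw [e2, tsum_mul_left, tsum_geometric_of_lt_one h0 h1]
        simp [div_eq_mul_inv]

theorem rEmbeddable_of_tree_condition
    (T : Set (List Bool)) (hT : ∀ s ∈ T, ∀ t : List Bool, t <+: s → t ∈ T)
    (Z : Set (ℕ → Bool))
    (hZ : ∀ r ∈ Z, ∀ n : ℕ, (List.ofFn fun i : Fin n => r i) ∈ T)
    (A : (ℕ → Bool) → Set ℕ) (hinj : Set.InjOn A Z)
    (had : IsAlmostDisjointFamily (A '' Z))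
    (B : List Bool → Set ℕ) (hBinf : ∀ s ∈ T, (B s).Infinite)
    (h1 : ∀ t ∈ T, B t = {n | ∃ i : Bool, (t ++ [i]) ∈ T ∧ n ∈ B (t ++ [i])})
    (h2 : ∀ s ∈ T, ∀ t ∈ T, ¬ s <+: t → ¬ t <+: s → (B s ∩ B t).Finite)
    (h3 : ∀ r ∈ Z, ∀ n : ℕ, A r ⊆ B (List.ofFn fun i : Fin n => r i)) :
    REmbeddable (A '' Z) := by
  classical
  set c : ℝ := 1/3 with hc
  have hc0 : (0:ℝ) ≤ c := by norm_num [hc]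
  have hc1 : c < 1 := by norm_num [hc]
  have hc2 : c < 1/2 := by norm_num [hc]
  have hcpos : (0:ℝ) < c := by norm_num [hc]
  -- monotonicity of B along the tree
  have Bmono : ∀ (s u : List Bool), s ++ u ∈ T → B (s ++ u) ⊆ B s := by
    intro s u
    induction u using List.reverseRecOn with
    | nil => intro _; simp
    | append_singleton u i ih =>
      intro hmem
      have hsu : s ++ u ∈ T := hT _ hmem _ ⟨[i], by simp⟩
      have step : B (s ++ (u ++ [i])) ⊆ B (s ++ u) := by
        intro n hn
        rw [h1 _ hsu]
        exact ⟨i, by rw [List.append_assoc]; exact hmem, by rw [List.append_assoc]; exact hn⟩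
      exact step.trans (ih hsu)
  have Bmono' : ∀ s t : List Bool, s <+: t → t ∈ T → B t ⊆ B s := by
    rintro s t ⟨u, rfl⟩ ht; exact Bmono s u ht
  -- the limit values
  set val : (ℕ → Bool) → ℝ := cantorFunction c with hval
  have valinj : Function.Injective val := cantorFunction_injective hcpos hc2
  set x : Set ℕ → ℝ := fun S => if h : ∃ r, r ∈ Z ∧ A r = S then val h.choose else 0 with hx
  have hxA : ∀ r ∈ Z, x (A r) = val r := by
    intro r hr
    have h : ∃ r', r' ∈ Z ∧ A r' = A r := ⟨r, hr, rfl⟩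
    have := h.choose_spec
    rw [hx]; simp only [dif_pos h]
    rw [hinj this.1 hr this.2]
  -- candidates and the function f
  set Cand : ℕ → List Bool → Prop := fun n t => t ∈ T ∧ t.length ≤ n ∧ n ∈ B t with hCand
  set MaxCand : ℕ → List Bool → Prop :=
    fun n t => Cand n t ∧ ∀ t', Cand n t' → t'.length ≤ t.length with hMC
  have exmax : ∀ n : ℕ, (∃ t, Cand n t) → ∃ t, MaxCand n t := by
    rintro n ⟨t0, ht0⟩
    have hfin : {t | Cand n t}.Finite :=
      (List.finite_length_le Bool n).subset (fun t ht => ht.2.1)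
    obtain ⟨t, ht, hmax⟩ :=
      Set.Finite.exists_maximalFor List.length {t | Cand n t} hfin ⟨t0, ht0⟩
    refine ⟨t, ht, fun t' ht' => ?_⟩
    rcases le_total t'.length t.length with h | h
    · exact h
    · exact hmax ht' h
  set f : ℕ → ℝ := fun n => if h : ∃ t, MaxCand n t then val (fun i => h.choose.getD i false)
    else 0 with hf
  refine ⟨f, x, ?_, ?_⟩
  · -- convergence
    rintro S ⟨r, hr, rfl⟩
    rw [hxA r hr]
    rw [LimAlong, Metric.tendsto_nhds]
    intro ε hε
    -- choose m
    have htend : Tendsto (fun m : ℕ => c ^ m / (1 - c)) atTop (𝓝 0) := by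
      simpa using (tendsto_pow_atTop_nhds_zero_of_lt_one hc0 hc1).div_const (1 - c)
    obtain ⟨m, hm⟩ := (htend.eventually (gt_mem_nhds hε)).exists
    set rt : List Bool := List.ofFn (fun i : Fin m => r i) with hrt
    have hrtT : rt ∈ T := hZ r hr m
    have hrtlen : rt.length = m := by simp [hrt]
    -- the finite bad set
    have hbad : (⋃ s ∈ {s : List Bool | s ∈ T ∧ s.length = m ∧ s ≠ rt}, (B s ∩ B rt)).Finite := by
      apply Set.Finite.biUnion ((List.finite_length_eq Bool m).subset fun s hs => hs.2.1)
      rintro s ⟨hsT, hslen, hsne⟩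
      refine h2 s hsT rt hrtT ?_ ?_
      · intro hp; exact hsne (hp.eq_of_length (by rw [hslen, hrtlen]))
      · intro hp; exact hsne (hp.eq_of_length (by rw [hslen, hrtlen])).symm
    obtain ⟨N, hN⟩ := hbad.bddAbove
    rw [eventually_inf_principal]
    rw [eventually_atTop]
    refine ⟨max (N + 1) m, fun n hn hnA => ?_⟩
    have hnm : m ≤ n := le_trans (le_max_right _ _) hn
    have hnN : N + 1 ≤ n := le_trans (le_max_left _ _) hn
    have hcand : Cand n rt := ⟨hrtT, by rw [hrtlen]; exact hnm, h3 r hr m hnA⟩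
    have hex : ∃ t, MaxCand n t := exmax n ⟨rt, hcand⟩
    set t : List Bool := hex.choose with htdef
    have htspec : MaxCand n t := hex.choose_spec
    have hfn : f n = val (fun i => t.getD i false) := by rw [hf]; simp only [dif_pos hex]; rfl
    have hmlen : m ≤ t.length := by
      have := htspec.2 rt hcand; rwa [hrtlen] at this
    -- the first m entries of t agree with r
    have htake : t.take m = rt := by
      by_contra hne
      have htakeT : t.take m ∈ T := hT t htspec.1.1 _ (List.take_prefix m t)
      have hnB : n ∈ B (t.take m) := Bmono' _ t (List.take_prefix m t) htspec.1.1 htspec.1.2.2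
      have hlen : (t.take m).length = m := by
        rw [List.length_take]; omega
      have : n ∈ ⋃ s ∈ {s : List Bool | s ∈ T ∧ s.length = m ∧ s ≠ rt}, (B s ∩ B rt) := by
        exact Set.mem_biUnion ⟨htakeT, hlen, hne⟩ ⟨hnB, hcand.2.2⟩
      have := hN this
      omega
    have hagree : ∀ i < m, (fun i => t.getD i false) i = r i := by
      intro i hi
      show t.getD i false = r i
      have hilen : i < t.length := lt_of_lt_of_le hi hmlen
      have : t.getD i false = t[i] := List.getD_eq_getElem t false hilen
      rw [this]
      have h4 : t[i] = (t.take m)[i]'(by rw [List.length_take]; omega) := by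
        rw [List.getElem_take]
      have h5 : (List.take m t)[i]'(by rw [List.length_take]; omega)
          = rt[i]'(by rw [hrtlen]; exact hi) := List.getElem_of_eq htake _
      rw [h4, h5]
      simp [hrt]
    calc dist (f n) (val r) = |val (fun i => t.getD i false) - val r| := by
          rw [hfn, Real.dist_eq]
      _ ≤ c ^ m / (1 - c) := cantor_dist_le hc0 hc1 hagree
      _ < ε := hm
  · -- injectivity
    rintro S ⟨r, hr, rfl⟩ S' ⟨r', hr', rfl⟩ hxx
    rw [hxA r hr, hxA r' hr'] at hxx
    rw [valinj hxx]
end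

section
/- For every almost disjoint family 𝒜 of infinite subsets of ℕ of cardinality 𝔠 (the cardinality of the continuum) there exists a function φ : 𝒜 → ℝ such that there is no subfamily ℬ ⊆ 𝒜 of cardinality 𝔠 and no function f : ℕ → ℝ with lim_{n∈B} f(n) = φ(B) for every B ∈ ℬ. In other words, no almost disjoint family of cardinality 𝔠 has the 𝔠-controlled ℝ-embedding property. -/
open Filter Topology Set

theorem no_continuum_controlled_embedding
    (𝒜 : Set (Set ℕ)) (h𝒜 : IsAlmostDisjointFamily 𝒜)
    (hcard : Cardinal.mk ↥𝒜 = Cardinal.continuum) :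
    ∃ φ : Set ℕ → ℝ, ¬ ∃ (ℬ : Set (Set ℕ)) (f : ℕ → ℝ), ℬ ⊆ 𝒜 ∧
      Cardinal.mk ↥ℬ = Cardinal.continuum ∧ ∀ B ∈ ℬ, LimAlong B f (φ B) := by
  classical
  obtain ⟨-, hmem, -⟩ := h𝒜
  set T := Cardinal.continuum.ord.ToType with hTdef
  have hT : Cardinal.mk T = Cardinal.continuum := Cardinal.mk_ord_toType _
  have hF : Cardinal.mk (ℕ → ℝ) = Cardinal.continuum := by
    rw [Cardinal.mk_arrow]
    simp [Cardinal.mk_real, Cardinal.continuum_power_aleph0]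
  obtain ⟨e⟩ : Nonempty (↥𝒜 ≃ T) := Cardinal.eq.1 (hcard.trans hT.symm)
  obtain ⟨g⟩ : Nonempty (T ≃ (ℕ → ℝ)) := Cardinal.eq.1 (hT.trans hF.symm)
  -- the set of "forbidden" values for a member `a`
  set S : ↥𝒜 → Set ℝ := fun a => {y | ∃ t, t ≤ e a ∧ LimAlong (a : Set ℕ) (g t) y}
    with hSdef
  have hNeBot : ∀ a : ↥𝒜, (Filter.atTop ⊓ Filter.principal (a : Set ℕ)).NeBot := by
    intro a
    rw [← Nat.cofinite_eq_atTop]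
    exact (hmem a a.2).cofinite_inf_principal_neBot
  have hSsmall : ∀ a : ↥𝒜, Cardinal.mk (S a) < Cardinal.continuum := by
    intro a
    have hinj : ∀ y : S a, ∃ t : T, t ≤ e a ∧ LimAlong (a : Set ℕ) (g t) (y : ℝ) :=
      fun y => y.2
    choose ch hch1 hch2 using hinj
    have : Function.Injective ch := by
      intro y₁ y₂ h
      have := hNeBot a
      have h1 := hch2 y₁
      have h2 := hch2 y₂
      rw [h] at h1
      exact Subtype.ext (tendsto_nhds_unique h1 h2)
    have h1 : Cardinal.mk (S a) ≤ Cardinal.mk (Set.Iic (e a)) := by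
      refine Cardinal.mk_le_of_injective (f := fun y => (⟨ch y, hch1 y⟩ : Set.Iic (e a))) ?_
      intro y₁ y₂ h
      exact this (by simpa using congrArg Subtype.val h)
    have h2 : Cardinal.mk (Set.Iic (e a)) < Cardinal.continuum := by
      have : Set.Iic (e a) = insert (e a) (Set.Iio (e a)) := by
        rw [Set.Iio_insert]
      rw [this]
      calc Cardinal.mk (insert (e a) (Set.Iio (e a)) : Set T)
          ≤ Cardinal.mk (Set.Iio (e a)) + 1 := Cardinal.mk_insert_le
        _ < Cardinal.continuum := by
            apply Cardinal.add_lt_of_lt Cardinal.aleph0_le_continuum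
            · exact Cardinal.mk_Iio_ord_toType (e a)
            · exact lt_of_lt_of_le Cardinal.one_lt_aleph0 Cardinal.aleph0_le_continuum
    exact lt_of_le_of_lt h1 h2
  have hpick : ∀ a : ↥𝒜, ∃ y : ℝ, y ∉ S a := by
    intro a
    by_contra h
    push_neg at h
    have huniv : S a = Set.univ := Set.eq_univ_of_forall h
    have hs := hSsmall a
    rw [huniv, Cardinal.mk_univ, Cardinal.mk_real] at hs
    exact lt_irrefl _ hs
  choose ψ hψ using hpick
  refine ⟨fun A => if h : A ∈ 𝒜 then ψ ⟨A, h⟩ else 0, ?_⟩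
  rintro ⟨ℬ, f, hsub, hBcard, hlim⟩
  set t₀ := g.symm f with ht₀
  -- find B ∈ ℬ with t₀ ≤ e ⟨B, _⟩
  have : ∃ B : ↥ℬ, t₀ ≤ e ⟨(B : Set ℕ), hsub B.2⟩ := by
    by_contra h
    push_neg at h
    have hinj : Function.Injective
        (fun B : ↥ℬ => (⟨e ⟨(B : Set ℕ), hsub B.2⟩, h B⟩ : Set.Iio t₀)) := by
      intro B₁ B₂ hB
      have h1 : e ⟨(B₁ : Set ℕ), hsub B₁.2⟩ = e ⟨(B₂ : Set ℕ), hsub B₂.2⟩ :=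
        congrArg Subtype.val hB
      have h2 := e.injective h1
      have h3 : (B₁ : Set ℕ) = B₂ := Subtype.mk_eq_mk.1 h2
      exact Subtype.ext h3
    have := Cardinal.mk_le_of_injective hinj
    rw [hBcard] at this
    exact absurd (lt_of_le_of_lt this (Cardinal.mk_Iio_ord_toType t₀)) (lt_irrefl _)
  obtain ⟨B, hB⟩ := this
  have hBA : (B : Set ℕ) ∈ 𝒜 := hsub B.2
  have hl : LimAlong (B : Set ℕ) f (ψ ⟨(B : Set ℕ), hBA⟩) := by
    simpa [hBA] using hlim B B.2
  exact hψ ⟨(B : Set ℕ), hBA⟩ ⟨t₀, hB, by simpa [ht₀] using hl⟩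
end

section
/- There exist a sequence (g_α)_{α<ω₁} of functions g_α : ℕ → {0,1,2} and an assignment to each pair of ordinals β < α < ω₁ of a natural number c(β,α) satisfying: (1) for all β < α < ω₁ and all k > c(β,α), the pair {g_β(k), g_α(k)} is not equal to {1,2}; (2) for all β < α < ω₁, g_β(c(β,α)) = 1 and g_α(c(β,α)) = 2; (3) for all γ < β < α < ω₁, if c(γ,β) > c(β,α) then c(γ,β) = c(γ,α); (4) for all α < ω₁ and all m ∈ ℕ the set {β < α : c(β,α) < m} is finite; (5) for all α < ω₁ the sets g_α⁻¹({1}) and g_α⁻¹({2}) are infinite. -/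
open Set

/-- the first uncountable ordinal -/
noncomputable def omega1 : Ordinal := (Cardinal.aleph 1).ord

open Classical

noncomputable section CoherentColoring

namespace CC

universe u
abbrev Row : Type (u+1) := (ℕ → Fin 3) × (Ordinal.{u} → ℕ)

def Cross (a b : Fin 3) : Prop := (a = 1 ∧ b = 2) ∨ (a = 2 ∧ b = 1)

lemma not_cross_self {a : Fin 3} : ¬ Cross a a := by
  rintro (⟨h1, h2⟩ | ⟨h1, h2⟩) <;> rw [h1] at h2 <;> exact absurd h2 (by decide)

lemma not_cross_left0 {a b : Fin 3} (h : a = 0) : ¬ Cross a b := by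
  rintro (⟨h1, _⟩ | ⟨h1, _⟩) <;> rw [h] at h1 <;> exact absurd h1 (by decide)

lemma cross_right1 {a b : Fin 3} (h : Cross a b) (hb : b = 1) : a = 2 := by
  rcases h with ⟨_, h2⟩ | ⟨h1, _⟩
  · rw [hb] at h2; exact absurd h2 (by decide)
  · exact h1

lemma cross_right2 {a b : Fin 3} (h : Cross a b) (hb : b = 2) : a = 1 := by
  rcases h with ⟨h1, _⟩ | ⟨_, h2⟩
  · exact h1
  · rw [hb] at h2; exact absurd h2 (by decide)

/-- extract an increasing sequence of witnesses from an unboundedness statement -/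
lemma nat_seq {P : ℕ → Prop} (h : ∀ B, ∃ k, B < k ∧ P k) (B0 : ℕ) :
    ∃ u : ℕ → ℕ, StrictMono u ∧ (∀ n, B0 < u n) ∧ ∀ n, P (u n) := by
  choose f hf1 hf2 using h
  refine ⟨fun n => Nat.rec (f B0) (fun _ p => f p) n, ?_, ?_, ?_⟩
  · apply strictMono_nat_of_lt_succ
    intro n
    exact hf1 _
  · intro n
    induction n with
    | zero => exact hf1 _
    | succ n ih => exact ih.trans (hf1 _)
  · intro n
    cases n with
    | zero => exact hf2 _
    | succ n => exact hf2 _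

structure ExtP (L : Ordinal.{u} → Row) (o : Ordinal.{u}) (r : Row) : Prop where
  c1 : ∀ β, β < o → ∀ k, r.2 β < k → ¬ Cross ((L β).1 k) (r.1 k)
  c2 : ∀ β, β < o → (L β).1 (r.2 β) = 1 ∧ r.1 (r.2 β) = 2
  c3 : ∀ γ β, γ < β → β < o → r.2 β < (L β).2 γ → (L β).2 γ = r.2 γ
  c4 : ∀ γ β, γ < β → β < o → r.2 γ ≤ max ((L β).2 γ) (r.2 β)
  c5 : ∀ B : ℕ, {β : Ordinal | β < o ∧ r.2 β < B}.Finite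
  c6a : {k | r.1 k = 1}.Infinite
  c6b : {k | r.1 k = 2}.Infinite
  c7 : ∀ a, a ≤ o → ∀ B : ℕ, ∃ k, B < k ∧ r.1 k = 1 ∧
      (∀ x, a ≤ x → x < o → r.2 x < k → (L x).1 k = 1) ∧
      (∀ x, x < a → r.2 x < k → (L x).1 k = 0)
  c8 : ∀ B : ℕ, ∃ k, B < k ∧ r.1 k = 0 ∧ (∀ x, x < o → r.2 x < k → (L x).1 k = 0)

theorem ExtP_congr {L L' : Ordinal.{u} → Row} {o : Ordinal.{u}} {r : Row}
    (h : ∀ β, β < o → L β = L' β) (he : ExtP L o r) : ExtP L' o r := by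
  obtain ⟨c1, c2, c3, c4, c5, c6a, c6b, c7, c8⟩ := he
  refine ⟨?_, ?_, ?_, ?_, c5, c6a, c6b, ?_, ?_⟩
  · intro β hβ k hk; rw [← h β hβ]; exact c1 β hβ k hk
  · intro β hβ; rw [← h β hβ]; exact c2 β hβ
  · intro γ β hγβ hβ; rw [← h β hβ]; exact c3 γ β hγβ hβ
  · intro γ β hγβ hβ; rw [← h β hβ]; exact c4 γ β hγβ hβ
  · intro a ha B
    obtain ⟨k, hk, h1, h2, h3⟩ := c7 a ha B
    refine ⟨k, hk, h1, ?_, ?_⟩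
    · intro x hax hx hvx; rw [← h x hx]; exact h2 x hax hx hvx
    · intro x hxa hvx; rw [← h x (lt_of_lt_of_le hxa ha)]; exact h3 x hxa hvx
  · intro B
    obtain ⟨k, hk, h1, h2⟩ := c8 B
    exact ⟨k, hk, h1, fun x hx hvx => by rw [← h x hx]; exact h2 x hx hvx⟩

theorem stage0 (L : Ordinal.{u} → Row) : ∃ r, ExtP L 0 r := by
  refine ⟨⟨fun k => ⟨k % 3, by omega⟩, fun _ => 0⟩, ?_, ?_, ?_, ?_, ?_, ?_, ?_, ?_, ?_⟩
  · intro β hβ; exact absurd hβ (zero_le' (a := β)).not_gt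
  · intro β hβ; exact absurd hβ (zero_le' (a := β)).not_gt
  · intro γ β hγβ hβ; exact absurd hβ (zero_le' (a := β)).not_gt
  · intro γ β hγβ hβ; exact absurd hβ (zero_le' (a := β)).not_gt
  · intro B
    convert Set.finite_empty
    ext β
    simp
  · apply Set.infinite_of_forall_exists_gt
    intro a
    refine ⟨3 * a + 4, ?_, by omega⟩
    show (⟨(3 * a + 4) % 3, by omega⟩ : Fin 3) = 1
    have h : (3 * a + 4) % 3 = 1 := by omega
    exact Fin.ext (by simp [h])
  · apply Set.infinite_of_forall_exists_gt
    intro a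
    refine ⟨3 * a + 5, ?_, by omega⟩
    show (⟨(3 * a + 5) % 3, by omega⟩ : Fin 3) = 2
    have h : (3 * a + 5) % 3 = 2 := by omega
    exact Fin.ext (by simp [h])
  · intro a ha B
    refine ⟨3 * B + 4, by omega, ?_, ?_, ?_⟩
    · show (⟨(3 * B + 4) % 3, by omega⟩ : Fin 3) = 1
      have h : (3 * B + 4) % 3 = 1 := by omega
      exact Fin.ext (by simp [h])
    · intro x hax hx
      exact absurd hx (zero_le' (a := x)).not_gt
    · intro x hxa
      exact absurd (lt_of_lt_of_le hxa ha) (zero_le' (a := x)).not_gt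
  · intro B
    refine ⟨3 * B + 3, by omega, ?_, ?_⟩
    · show (⟨(3 * B + 3) % 3, by omega⟩ : Fin 3) = 0
      have h : (3 * B + 3) % 3 = 0 := by omega
      exact Fin.ext (by simp [h])
    · intro x hx
      exact absurd hx (zero_le' (a := x)).not_gt

theorem stageSucc (ξ : Ordinal.{u}) (L : Ordinal.{u} → Row)
    (IH : ∀ β, β ≤ ξ → ExtP L β (L β)) : ∃ r, ExtP L (Order.succ ξ) r := by
  classical
  obtain ⟨E1, E2, E3, E4, E5, E6a, E6b, E7, E8⟩ := IH ξ le_rfl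
  set g : ℕ → Fin 3 := (L ξ).1 with hgdef
  set c : Ordinal → ℕ := (L ξ).2 with hcdef
  -- the joint service point
  obtain ⟨q, -, hqg, hq1, -⟩ := E7 0 (zero_le' (a := ξ)) 0
  -- the fresh zero points (for new 1s and for keeping c8)
  obtain ⟨uu, humono, huq, huP⟩ := nat_seq E8 q
  set G : ℕ → Fin 3 := fun k => if k = q then 2 else if (∃ i, k = uu (2*i)) then 1 else g k
    with hGdef
  set v : Ordinal → ℕ := fun x => if x = ξ then q else (if c x ≤ q then q else c x) with hvdef
  have hGq : G q = 2 := by simp [hGdef]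
  have hGu : ∀ i, G (uu (2*i)) = 1 := by
    intro i
    rw [hGdef]
    simp only
    rw [if_neg (by exact fun h => absurd (h ▸ huq (2*i)) (lt_irrefl _)), if_pos ⟨i, rfl⟩]
  have hGo : ∀ k, k ≠ q → (¬∃ i, k = uu (2*i)) → G k = g k := by
    intro k h1 h2
    rw [hGdef]
    simp only
    rw [if_neg h1, if_neg h2]
  have hvξ : v ξ = q := by simp [hvdef]
  have hvx : ∀ x, x < ξ → v x = if c x ≤ q then q else c x := by
    intro x hx
    rw [hvdef]
    simp only
    rw [if_neg (ne_of_lt hx)]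
  have hvq : ∀ x, x ≤ ξ → q ≤ v x := by
    intro x hx
    rcases eq_or_lt_of_le hx with rfl | hx'
    · rw [hvξ]
    · rw [hvx x hx']
      split
      · exact le_rfl
      · omega
  have hcne : ∀ β, β < ξ → c β ≠ q := by
    intro β hβ h
    have h2 := (E2 β hβ).2
    rw [h, hqg] at h2
    exact absurd h2 (by decide)
  have hcv : ∀ x, x < ξ → ∀ k, q < k → v x < k → c x < k := by
    intro x hx k hqk hvk
    rw [hvx x hx] at hvk
    rcases le_or_gt (c x) q with h | h
    · omega
    · rw [if_neg (by omega)] at hvk; exact hvk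
  -- the ruled-zero property of the uu points
  have huu0 : ∀ n, g (uu n) = 0 := fun n => (huP n).1
  have huu1 : ∀ n, ∀ x, x < ξ → c x < uu n → (L x).1 (uu n) = 0 := fun n => (huP n).2
  refine ⟨⟨G, v⟩, ?_, ?_, ?_, ?_, ?_, ?_, ?_, ?_, ?_⟩
  -- c1
  · intro β hβ k hk
    simp only at hk ⊢
    rcases eq_or_lt_of_le (Order.lt_succ_iff.mp hβ) with rfl | hβξ
    · -- β = ξ
      rw [hvξ] at hk
      have hkq : k ≠ q := by omega
      by_cases hO : ∃ i, k = uu (2*i)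
      · obtain ⟨i, rfl⟩ := hO
        exact not_cross_left0 (huu0 _)
      · rw [hGo k hkq hO]
        exact not_cross_self
    · -- β < ξ
      have hqk : q < k := lt_of_le_of_lt (hvq β (le_of_lt hβξ)) hk
      have hck : c β < k := hcv β hβξ k hqk hk
      by_cases hO : ∃ i, k = uu (2*i)
      · obtain ⟨i, rfl⟩ := hO
        intro hcr
        have := cross_right1 hcr (hGu i)
        rw [huu1 _ β hβξ hck] at this
        exact absurd this (by decide)
      · rw [hGo k (by omega) hO]
        exact E1 β hβξ k hck
  -- c2
  · intro β hβ
    simp only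
    rcases eq_or_lt_of_le (Order.lt_succ_iff.mp hβ) with rfl | hβξ
    · rw [hvξ]; exact ⟨hqg, hGq⟩
    · rw [hvx β hβξ]
      rcases le_or_gt (c β) q with h | h
      · rw [if_pos h]
        refine ⟨?_, hGq⟩
        exact hq1 β (zero_le' (a := β)) hβξ (lt_of_le_of_ne h (hcne β hβξ))
      · rw [if_neg (by omega)]
        constructor
        · exact (E2 β hβξ).1
        · have h1 : c β ≠ q := hcne β hβξ
          have h2 : ¬ ∃ i, c β = uu (2*i) := by
            rintro ⟨i, hi⟩
            have := (E2 β hβξ).2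
            rw [hi, huu0 _] at this
            exact absurd this (by decide)
          rw [hGo _ h1 h2]
          exact (E2 β hβξ).2
  -- c3
  · intro γ β hγβ hβ hlt
    simp only at hlt ⊢
    have hγξ : γ < ξ := lt_of_lt_of_le hγβ (Order.lt_succ_iff.mp hβ)
    have hforced : q < (L β).2 γ → ((L ξ).2 γ = (L β).2 γ → v γ = (L β).2 γ) := by
      intro hq h
      rw [hvx γ hγξ, ← hcdef] at *
      rw [h, if_neg (by omega)]
    rcases eq_or_lt_of_le (Order.lt_succ_iff.mp hβ) with rfl | hβξ
    · rw [hvξ] at hlt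
      exact (hforced hlt rfl).symm
    · -- β < ξ : use old coherence at top ξ
      have hqlt : q < (L β).2 γ := by
        rcases le_or_gt (c β) q with h | h
        · rw [hvx β hβξ, if_pos h] at hlt; exact hlt
        · rw [hvx β hβξ, if_neg (by omega)] at hlt; omega
      have hcβ : (L ξ).2 β < (L β).2 γ := by
        rw [← hcdef]
        rcases le_or_gt (c β) q with h | h
        · omega
        · rw [hvx β hβξ, if_neg (by omega)] at hlt; exact hlt
      have := E3 γ β hγβ hβξ hcβ
      exact (hforced hqlt this.symm).symm
  -- c4
  · intro γ β hγβ hβ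
    simp only
    have hγξ : γ < ξ := lt_of_lt_of_le hγβ (Order.lt_succ_iff.mp hβ)
    rcases le_or_gt (c γ) q with hγu | hγf
    · -- γ unforced
      have : v γ = q := by rw [hvx γ hγξ, if_pos hγu]
      rw [this]
      exact le_max_of_le_right (hvq β (Order.lt_succ_iff.mp hβ))
    · -- γ forced
      have hvγ : v γ = c γ := by rw [hvx γ hγξ, if_neg (by omega)]
      rcases eq_or_lt_of_le (Order.lt_succ_iff.mp hβ) with rfl | hβξ
      · rw [hvγ, hvξ, hcdef]
        exact le_max_left _ _
      · have h4 := E4 γ β hγβ hβξ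
        rcases le_or_gt (c β) q with h | h
        · rcases le_max_iff.mp h4 with h' | h'
          · rw [hvγ]
            exact le_max_of_le_left h'
          · omega
        · have hvβ : v β = c β := by rw [hvx β hβξ, if_neg (by omega)]
          rw [hvγ, hvβ]
          exact h4
  -- c5
  · intro B
    have hsub : {β : Ordinal | β < Order.succ ξ ∧ v β < B} ⊆
        insert ξ {β : Ordinal | β < ξ ∧ (L ξ).2 β < max B (q+1)} := by
      rintro β ⟨hβ, hvβ⟩
      rcases eq_or_lt_of_le (Order.lt_succ_iff.mp hβ) with rfl | hβξ
      · exact mem_insert _ _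
      · refine mem_insert_of_mem _ ⟨hβξ, ?_⟩
        rw [← hcdef]
        rw [hvx β hβξ] at hvβ
        rcases le_or_gt (c β) q with h | h
        · omega
        · rw [if_neg (by omega)] at hvβ; omega
    exact Set.Finite.subset ((E5 (max B (q+1))).insert ξ) hsub
  -- c6a
  · apply Set.infinite_of_forall_exists_gt
    intro a
    refine ⟨uu (2*(a+1)), ?_, ?_⟩
    · simp only [mem_setOf_eq]
      exact hGu (a+1)
    · have := humono.le_apply (x := 2*(a+1))
      omega
  -- c6b
  · apply Set.Infinite.mono (s := {k | g k = 2})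
    · intro k hk
      simp only [mem_setOf_eq] at hk ⊢
      have h1 : k ≠ q := fun h => by rw [h, hqg] at hk; exact absurd hk (by decide)
      have h2 : ¬ ∃ i, k = uu (2*i) := by
        rintro ⟨i, rfl⟩
        rw [huu0] at hk
        exact absurd hk (by decide)
      rw [hGo k h1 h2]; exact hk
    · exact E6b
  -- c7
  · intro a ha B
    rcases eq_or_lt_of_le ha with rfl | haξ'
    · -- a = succ ξ
      refine ⟨uu (2*(B+1)), ?_, hGu (B+1), ?_, ?_⟩
      · have := humono.le_apply (x := 2*(B+1)); omega
      · intro x hax hx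
        exact absurd (lt_of_le_of_lt hax hx) (lt_irrefl _)
      · intro x hxa hvx'
        simp only at hvx'
        rcases eq_or_lt_of_le (Order.lt_succ_iff.mp hxa) with rfl | hxξ
        · exact huu0 _
        · have hq : q < uu (2*(B+1)) := huq _
          exact huu1 _ x hxξ (hcv x hxξ _ hq hvx')
    · have haξ : a ≤ ξ := Order.lt_succ_iff.mp haξ'
      obtain ⟨k, hkB, hkg, hk1, hk0⟩ := E7 a haξ (max B q)
      have hkq : q < k := lt_of_le_of_lt (le_max_right _ _) hkB
      have h2 : ¬ ∃ i, k = uu (2*i) := by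
        rintro ⟨i, rfl⟩
        rw [huu0] at hkg
        exact absurd hkg (by decide)
      refine ⟨k, lt_of_le_of_lt (le_max_left _ _) hkB, ?_, ?_, ?_⟩
      · show G k = 1
        rw [hGo k (by omega) h2]; exact hkg
      · intro x hax hx hvx'
        simp only at hvx'
        rcases eq_or_lt_of_le (Order.lt_succ_iff.mp hx) with rfl | hxξ
        · rw [← hgdef]; exact hkg
        · exact hk1 x hax hxξ (hcv x hxξ k hkq hvx')
      · intro x hxa hvx'
        simp only at hvx'
        have hxξ : x < ξ := lt_of_lt_of_le hxa haξ
        exact hk0 x hxa (hcv x hxξ k hkq hvx')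
  -- c8
  · intro B
    refine ⟨uu (2*B+1), ?_, ?_, ?_⟩
    · have := humono.le_apply (x := 2*B+1); omega
    · have h1 : uu (2*B+1) ≠ q := by have := huq (2*B+1); omega
      have h2 : ¬ ∃ i, uu (2*B+1) = uu (2*i) := by
        rintro ⟨i, hi⟩
        have := humono.injective hi
        omega
      show G (uu (2*B+1)) = 0
      rw [hGo _ h1 h2]
      exact huu0 _
    · intro x hx hvx'
      simp only at hvx'
      rcases eq_or_lt_of_le (Order.lt_succ_iff.mp hx) with rfl | hxξ
      · exact huu0 _
      · exact huu1 _ x hxξ (hcv x hxξ _ (huq _) hvx')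

lemma olt1 {x y : Ordinal.{u}} : x < y + 1 ↔ x ≤ y := by
  rw [Ordinal.add_one_eq_succ]; exact Order.lt_succ_iff

theorem stageLimit (o : Ordinal.{u}) (hlim : Order.IsSuccLimit o) (ho : o < (Cardinal.aleph 1).ord)
    (L : Ordinal.{u} → Row) (IH : ∀ β, β < o → ExtP L β (L β)) : ∃ r, ExtP L o r := by
  classical
  -- enumeration of the predecessors of o
  have hctble : (Set.Iio o).Countable := by
    rw [Cardinal.countable_iff_lt_aleph_one, Ordinal.mk_Iio_ordinal]
    have h1 : o.card < Cardinal.aleph 1 := Cardinal.lt_ord.mp ho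
    have := Cardinal.lift_lt.{u, u+1}.mpr h1
    simpa using this
  obtain ⟨f, hf⟩ := hctble.exists_eq_range ⟨0, hlim.pos⟩
  have hfo : ∀ n, f n < o := by
    intro n
    have : f n ∈ Set.Iio o := by rw [hf]; exact mem_range_self n
    exact this
  have hfsurj : ∀ x, x < o → ∃ n, f n = x := by
    intro x hx
    have : x ∈ range f := by rw [← hf]; exact hx
    exact this
  -- the ladder
  obtain ⟨δ, hδmono, hδo, hδcof, hfδ⟩ :
      ∃ δ : ℕ → Ordinal.{u}, StrictMono δ ∧ (∀ n, δ n < o) ∧ (∀ x, x < o → ∃ n, x < δ n) ∧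
        ∀ n, f n < δ n := by
    refine ⟨fun n => Nat.rec (f 0 + 1) (fun n p => max (p + 1) (f (n + 1) + 1)) n, ?_, ?_, ?_, ?_⟩
    · apply strictMono_nat_of_lt_succ
      intro n
      exact lt_of_lt_of_le (lt_of_lt_of_le (lt_add_one _) le_rfl) (le_max_left _ _)
    · intro n
      induction n with
      | zero => exact hlim.succ_lt (hfo 0)
      | succ n ih => exact max_lt (hlim.succ_lt ih) (hlim.succ_lt (hfo (n + 1)))
    · intro x hx
      obtain ⟨n, rfl⟩ := hfsurj x hx
      cases n with
      | zero => exact ⟨0, olt1.mpr le_rfl⟩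
      | succ n => exact ⟨n + 1, lt_of_lt_of_le (olt1.mpr le_rfl) (le_max_right _ _)⟩
    · intro n
      cases n with
      | zero => exact olt1.mpr le_rfl
      | succ n => exact lt_of_lt_of_le (olt1.mpr le_rfl) (le_max_right _ _)
  have hδinj : Function.Injective δ := hδmono.injective
  -- old invariants at each ladder point
  have E : ∀ m : ℕ, ExtP L (δ m) (L (δ m)) := fun m => IH (δ m) (hδo m)
  -- the gap bottoms
  set am : ℕ → Ordinal.{u} := fun m => Nat.casesOn m 0 (fun n => δ n + 1) with hamdef
  have ham : ∀ m, am m ≤ δ m := by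
    intro m
    cases m with
    | zero => exact zero_le'
    | succ n =>
      show δ n + 1 ≤ δ (n + 1)
      rw [Ordinal.add_one_eq_succ, Order.succ_le_iff]
      exact hδmono (Nat.lt_succ_self n)
  have ham1 : ∀ m x, x < am (m + 1) ↔ x ≤ δ m := fun m x => olt1
  -- choice functions for the old c7/c8 statements
  have H7 : ∀ (m : ℕ) (a : Ordinal.{u}), a ≤ δ m → ∀ p : ℕ, ∃ k, p < k ∧
      (L (δ m)).1 k = 1 ∧
      (∀ x, a ≤ x → x < δ m → (L (δ m)).2 x < k → (L x).1 k = 1) ∧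
      (∀ x, x < a → (L (δ m)).2 x < k → (L x).1 k = 0) :=
    fun m a ha p => (E m).c7 a ha p
  have H8 : ∀ (m : ℕ) (p : ℕ), ∃ k, p < k ∧ (L (δ m)).1 k = 0 ∧
      (∀ x, x < δ m → (L (δ m)).2 x < k → (L x).1 k = 0) := fun m p => (E m).c8 p
  choose w7 hw7a hw7b hw7c hw7d using H7
  choose w8 hw8a hw8b hw8c using H8
  -- the service points q with all of their properties
  obtain ⟨q, Q1, Q0, Q2, Q3, Q4, Q5, Q6, Q7, Q8⟩ :
      ∃ q : ℕ → ℕ, StrictMono q ∧ (∀ m, 0 < q m) ∧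
        (∀ m, (L (δ m)).1 (q m) = 1) ∧
        (∀ m x, am m ≤ x → x < δ m → (L (δ m)).2 x < q m → (L x).1 (q m) = 1) ∧
        (∀ m x, x < am m → (L (δ m)).2 x < q m → (L x).1 (q m) = 0) ∧
        (∀ m i j, i ≤ m + 1 → j ≤ m + 1 → (L (δ j)).2 (δ i) < q m) ∧
        (∀ m j, j ≤ m → ∃ k, q m < k ∧ k < q (m + 1) ∧
          (L (δ (m+1))).1 k = 1 ∧
          (∀ x, min (f j) (δ (m+1)) ≤ x → x < δ (m+1) → (L (δ (m+1))).2 x < k → (L x).1 k = 1) ∧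
          (∀ x, x < min (f j) (δ (m+1)) → (L (δ (m+1))).2 x < k → (L x).1 k = 0)) ∧
        (∀ m, ∃ k, q m < k ∧ k < q (m + 1) ∧
          (L (δ (m+1))).1 k = 1 ∧
          (∀ x, x < δ (m+1) → (L (δ (m+1))).2 x < k → (L x).1 k = 0)) ∧
        (∀ m, ∃ k, q m < k ∧ k < q (m + 1) ∧
          (L (δ (m+1))).1 k = 0 ∧
          (∀ x, x < δ (m+1) → (L (δ (m+1))).2 x < k → (L x).1 k = 0)) := by
    -- bound collecting all witnesses that must lie below the next service point
    set A : ℕ → ℕ := fun m => (Finset.range (m + 2)).sup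
      (fun i => (Finset.range (m + 2)).sup (fun j => (L (δ j)).2 (δ i))) with hAdef
    set W : ℕ → ℕ → ℕ := fun m p => max (A m)
      (max ((Finset.range (m + 1)).sup (fun j => w7 m (min (f j) (δ m)) (min_le_right _ _) p))
        (max (w7 m (δ m) le_rfl p) (w8 m p))) with hWdef
    set step : ℕ → ℕ → ℕ := fun m p => w7 m (am m) (ham m) (max p (W m p)) with hstepdef
    set q : ℕ → ℕ := fun n => Nat.rec (step 0 0) (fun n qn => step (n + 1) qn) n with hqdef
    have hq0 : q 0 = step 0 0 := rfl
    have hqS : ∀ n, q (n + 1) = step (n + 1) (q n) := fun n => rfl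
    have hstep_gt : ∀ m p, max p (W m p) < step m p := fun m p => hw7a m (am m) (ham m) _
    have hq_gt : ∀ m, (∀ p, q m = step m p → max p (W m p) < q m) := by
      intro m p h; rw [h]; exact hstep_gt m p
    have hqmono : StrictMono q := by
      apply strictMono_nat_of_lt_succ
      intro n
      have := hstep_gt (n + 1) (q n)
      rw [← hqS n] at this
      calc q n ≤ max (q n) (W (n + 1) (q n)) := le_max_left _ _
        _ < q (n + 1) := by rw [hqS n]; exact hstep_gt (n + 1) (q n)
    -- the pattern properties of q m itself
    have hpat : ∀ m, (L (δ m)).1 (q m) = 1 ∧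
        (∀ x, am m ≤ x → x < δ m → (L (δ m)).2 x < q m → (L x).1 (q m) = 1) ∧
        (∀ x, x < am m → (L (δ m)).2 x < q m → (L x).1 (q m) = 0) := by
      intro m
      cases m with
      | zero => exact ⟨hw7b _ _ _ _, hw7c _ _ _ _, hw7d _ _ _ _⟩
      | succ n =>
        rw [hqS n]
        exact ⟨hw7b _ _ _ _, hw7c _ _ _ _, hw7d _ _ _ _⟩
    have hWq : ∀ m, W m (Nat.casesOn m 0 (fun n => q n)) < q m := by
      intro m
      cases m with
      | zero =>
        have := hstep_gt 0 0
        rw [← hq0] at this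
        exact lt_of_le_of_lt (le_max_right _ _) this
      | succ n =>
        have := hstep_gt (n + 1) (q n)
        rw [← hqS n] at this
        exact lt_of_le_of_lt (le_max_right _ _) this
    have hqpos : ∀ m, 0 < q m := by
      intro m
      have h := hWq m
      cases m with
      | zero =>
        have := hstep_gt 0 0
        rw [← hq0] at this
        omega
      | succ n =>
        have := hstep_gt (n+1) (q n)
        rw [← hqS n] at this
        omega
    refine ⟨q, hqmono, hqpos, fun m => (hpat m).1, fun m => (hpat m).2.1, fun m => (hpat m).2.2,
      ?_, ?_, ?_, ?_⟩
    · -- Q5 : domination of the mutual ladder distances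
      intro m i j hi hj
      have hmem : (L (δ j)).2 (δ i) ≤ A m := by
        rw [hAdef]
        exact le_trans (Finset.le_sup (f := fun j => (L (δ j)).2 (δ i))
          (Finset.mem_range.mpr (Nat.lt_succ_of_le hj)))
          (Finset.le_sup (f := fun i => (Finset.range (m + 2)).sup fun j => (L (δ j)).2 (δ i))
          (Finset.mem_range.mpr (Nat.lt_succ_of_le hi)))
      calc (L (δ j)).2 (δ i) ≤ A m := hmem
        _ ≤ W m (Nat.casesOn m 0 (fun n => q n)) := by rw [hWdef]; exact le_max_left _ _
        _ < q m := hWq m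
    · -- Q6
      intro m j hj
      refine ⟨w7 (m+1) (min (f j) (δ (m+1))) (min_le_right _ _) (q m), ?_, ?_,
        hw7b _ _ _ _, hw7c _ _ _ _, hw7d _ _ _ _⟩
      · exact hw7a _ _ _ _
      · have hle : w7 (m+1) (min (f j) (δ (m+1))) (min_le_right _ _) (q m) ≤ W (m+1) (q m) := by
          rw [hWdef]
          refine le_trans ?_ (le_max_of_le_right (le_max_left _ _))
          exact Finset.le_sup (f := fun j => w7 (m+1) (min (f j) (δ (m+1))) (min_le_right _ _) (q m))
            (Finset.mem_range.mpr (Nat.lt_succ_of_le (le_trans hj (Nat.le_succ m))))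
        calc _ ≤ W (m+1) (q m) := hle
          _ < q (m+1) := by
            have := hstep_gt (m + 1) (q m)
            rw [← hqS m] at this
            exact lt_of_le_of_lt (le_max_right _ _) this
    · -- Q7
      intro m
      refine ⟨w7 (m+1) (δ (m+1)) le_rfl (q m), hw7a _ _ _ _, ?_, hw7b _ _ _ _, ?_⟩
      · calc w7 (m+1) (δ (m+1)) le_rfl (q m) ≤ W (m+1) (q m) := by
              rw [hWdef]
              exact le_max_of_le_right (le_max_of_le_right (le_max_left _ _))
          _ < q (m+1) := by
            have := hstep_gt (m + 1) (q m)
            rw [← hqS m] at this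
            exact lt_of_le_of_lt (le_max_right _ _) this
      · intro x hx
        exact hw7d _ _ _ _ x hx
    · -- Q8
      intro m
      refine ⟨w8 (m+1) (q m), hw8a _ _, ?_, hw8b _ _, hw8c _ _⟩
      calc w8 (m+1) (q m) ≤ W (m+1) (q m) := by
            rw [hWdef]
            exact le_max_of_le_right (le_max_of_le_right (le_max_right _ _))
        _ < q (m+1) := by
          have := hstep_gt (m + 1) (q m)
          rw [← hqS m] at this
          exact lt_of_le_of_lt (le_max_right _ _) this

  -- derived simple facts about q
  set qp : ℕ → ℕ := fun m => Nat.casesOn m 0 (fun n => q n) with hqpdef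
  have hqp0 : qp 0 = 0 := rfl
  have hqpS : ∀ n, qp (n + 1) = q n := fun _ => rfl
  have hqp_lt : ∀ m, qp m < q m := by
    intro m
    cases m with
    | zero => exact Q0 0
    | succ n => exact Q1 (Nat.lt_succ_self n)
  have hqp_le : ∀ m j, j < m → q j ≤ qp m := by
    intro m j hj
    cases m with
    | zero => omega
    | succ n => exact Q1.monotone (Nat.lt_succ_iff.mp hj)
  -- telescope
  have La : ∀ (x : Ordinal.{u}) (n m : ℕ), x < δ n → n ≤ m →
      (L (δ m)).2 x ≤ max ((L (δ n)).2 x) (qp m) := by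
    intro x n m hx hnm
    induction m with
    | zero =>
      have h0 : n = 0 := Nat.le_zero.mp hnm
      subst h0
      exact le_max_left _ _
    | succ m ih =>
      rcases Nat.lt_succ_iff_lt_or_eq.mp (Nat.lt_succ_of_le hnm) with h | rfl
      · have hnm' : n ≤ m := by omega
        have hxm : x < δ m := lt_of_lt_of_le hx (hδmono.monotone hnm')
        have h4 := (E (m+1)).c4 x (δ m) hxm (hδmono (Nat.lt_succ_self m))
        have h5 : (L (δ (m+1))).2 (δ m) < q m := Q5 m m (m+1) (by omega) (by omega)
        have hih := ih hnm'
        have hqpm : qp m ≤ q m := le_of_lt (hqp_lt m)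
        have hqp1 : qp (m+1) = q m := rfl
        rw [hqp1]
        rcases le_max_iff.mp h4 with h' | h' <;> rcases le_max_iff.mp hih with h'' | h'' <;>
          omega
      · exact le_max_left _ _
  -- upward stability
  have Lb : ∀ (x : Ordinal.{u}) (n m : ℕ), x < δ n → n ≤ m →
      (∀ j, n ≤ j → j < m → q j < (L (δ n)).2 x) → (L (δ m)).2 x = (L (δ n)).2 x := by
    intro x n m hx hnm hq
    induction m with
    | zero =>
      have h0 : n = 0 := Nat.le_zero.mp hnm
      subst h0; rfl
    | succ m ih =>
      rcases Nat.lt_succ_iff_lt_or_eq.mp (Nat.lt_succ_of_le hnm) with h | rfl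
      · have hnm' : n ≤ m := by omega
        have hih := ih hnm' (fun j h1 h2 => hq j h1 (by omega))
        have hxm : x < δ m := lt_of_lt_of_le hx (hδmono.monotone hnm')
        have h5 : (L (δ (m+1))).2 (δ m) < q m := Q5 m m (m+1) (by omega) (by omega)
        have hcond : (L (δ (m+1))).2 (δ m) < (L (δ m)).2 x := by
          have := hq m hnm' (Nat.lt_succ_self m)
          omega
        have h3 := (E (m+1)).c3 x (δ m) hxm (hδmono (Nat.lt_succ_self m)) hcond
        rw [← h3, hih]
      · rfl
  -- downward stability
  have Lc : ∀ (d : ℕ) (x : Ordinal.{u}) (n : ℕ), x < δ n →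
      q (n + d) < (L (δ (n + d))).2 x → (L (δ n)).2 x = (L (δ (n + d))).2 x := by
    intro d
    induction d with
    | zero => intro x n hx hq; rfl
    | succ d ih =>
      intro x n hx hqm
      rw [show n + (d + 1) = n + d + 1 from rfl] at hqm ⊢
      have hj : x < δ (n + d) := lt_of_lt_of_le hx (hδmono.monotone (Nat.le_add_right n d))
      have h5 : (L (δ (n + d + 1))).2 (δ (n + d)) < q (n + d) :=
        Q5 (n + d) (n + d) (n + d + 1) (by omega) (by omega)
      have h4 := (E (n + d + 1)).c4 x (δ (n + d)) hj (hδmono (by omega))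
      have hq1 : q (n + d) < q (n + d + 1) := Q1 (by omega)
      have hK : q (n + d) < (L (δ (n + d))).2 x := by
        rcases le_max_iff.mp h4 with h' | h' <;> omega
      have h3 := (E (n + d + 1)).c3 x (δ (n + d)) hj (hδmono (by omega)) (by omega)
      have hrec := ih x n hx hK
      rw [hrec, h3]
  have LcU : ∀ (x : Ordinal.{u}) (n m : ℕ), x < δ n → n ≤ m →
      q m < (L (δ m)).2 x → (L (δ n)).2 x = (L (δ m)).2 x := by
    intro x n m hx hnm hq
    obtain ⟨d, rfl⟩ := Nat.exists_eq_add_of_le hnm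
    exact Lc d x n hx hq
  -- block index
  have hex : ∀ k : ℕ, ∃ m, k ≤ q m := by
    intro k
    exact ⟨k, Q1.le_apply⟩
  set mb : ℕ → ℕ := fun k => Nat.find (hex k) with hmbdef
  have hmb1 : ∀ k, k ≤ q (mb k) := fun k => Nat.find_spec (hex k)
  have hmb2 : ∀ k m, m < mb k → q m < k := by
    intro k m hm
    have := Nat.find_min (hex k) hm
    omega
  have hmb3 : ∀ k m, qp m < k → k ≤ q m → mb k = m := by
    intro k m h1 h2
    have hle : mb k ≤ m := Nat.find_min' (hex k) h2
    rcases Nat.lt_or_ge (mb k) m with h | h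
    · have ha : q (mb k) ≤ qp m := hqp_le m (mb k) h
      have hb := hmb1 k
      omega
    · omega
  have hqpmb : ∀ k, 0 < k → qp (mb k) < k := by
    intro k hk
    cases hmk : mb k with
    | zero => rw [hqp0]; exact hk
    | succ n =>
      rw [hqpS]
      exact hmb2 k n (by omega)
  -- the new coloring and the new c-values
  set G : ℕ → Fin 3 := fun k => if ∃ n, q n = k then 2 else (L (δ (mb k))).1 k with hGdef
  set ns : Ordinal.{u} → ℕ := fun x => if h2 : ∃ n, x < δ n then Nat.find h2 else 0 with hnsdef
  set v : Ordinal.{u} → ℕ := fun x =>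
    if h : ∃ n, δ n = x then q (Nat.find h)
    else if (L (δ (ns x))).2 x ≤ q (ns x) then q (ns x) else (L (δ (ns x))).2 x with hvdef
  have hGq : ∀ n, G (q n) = 2 := by
    intro n
    rw [hGdef]
    simp only
    rw [if_pos ⟨n, rfl⟩]
  have hGo : ∀ k, (¬ ∃ n, q n = k) → G k = (L (δ (mb k))).1 k := by
    intro k h
    rw [hGdef]
    simp only
    rw [if_neg h]
  have hns1 : ∀ x, x < o → x < δ (ns x) := by
    intro x hx
    have h2 : ∃ n, x < δ n := hδcof x hx
    rw [hnsdef]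
    simp only
    rw [dif_pos h2]
    exact Nat.find_spec h2
  have hns3 : ∀ x m, x < o → x < δ m → ns x ≤ m := by
    intro x m hx hm
    have h2 : ∃ n, x < δ n := hδcof x hx
    rw [hnsdef]
    simp only
    rw [dif_pos h2]
    exact Nat.find_min' h2 hm
  have hns2 : ∀ x j, x < o → j < ns x → ¬ x < δ j := by
    intro x j hx hj h
    exact absurd (hns3 x j hx h) (by omega)
  have hvlad : ∀ n, v (δ n) = q n := by
    intro n
    rw [hvdef]
    simp only
    rw [dif_pos ⟨n, rfl⟩]
    congr 1
    exact hδinj (Nat.find_spec (⟨n, rfl⟩ : ∃ m, δ m = δ n))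
  have hv_nl : ∀ x, (¬ ∃ n, δ n = x) →
      v x = if (L (δ (ns x))).2 x ≤ q (ns x) then q (ns x) else (L (δ (ns x))).2 x := by
    intro x h
    rw [hvdef]
    simp only
    rw [dif_neg h]
  have hv_ge_nl : ∀ x, (¬ ∃ n, δ n = x) → q (ns x) ≤ v x := by
    intro x h
    rw [hv_nl x h]
    split
    · exact le_rfl
    · omega
  -- strictness of the unforced case
  have hne_cq : ∀ (x : Ordinal.{u}) m, x < δ m → (L (δ m)).2 x ≠ q m := by
    intro x m hx h
    have h2 := ((E m).c2 x hx).2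
    rw [h, Q2 m] at h2
    exact absurd h2 (by decide)
  -- the central trigger lemma
  have T2 : ∀ x, x < o → ∀ m k, qp m < k → k ≤ q m → v x < k →
      x < δ m ∧ (L (δ m)).2 x < k := by
    intro x hx m k h1 h2 h3
    by_cases hlad : ∃ n, δ n = x
    · obtain ⟨i, rfl⟩ := hlad
      rw [hvlad i] at h3
      have him : i < m := by
        by_contra hh
        push_neg at hh
        have := Q1.monotone hh
        omega
      refine ⟨hδmono him, ?_⟩
      have hlt : (L (δ m)).2 (δ i) < qp m := by
        cases m with
        | zero => omega
        | succ n => exact Q5 n i (n + 1) (by omega) (by omega)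
      omega
    · have hq_ns : q (ns x) ≤ v x := hv_ge_nl x hlad
      have hnm : ns x ≤ m := by
        by_contra hh
        push_neg at hh
        have := Q1 hh
        omega
      have hxm : x < δ m := lt_of_lt_of_le (hns1 x hx) (hδmono.monotone hnm)
      refine ⟨hxm, ?_⟩
      have htel := La x (ns x) m (hns1 x hx) hnm
      rw [hv_nl x hlad] at h3
      rcases le_or_gt ((L (δ (ns x))).2 x) (q (ns x)) with hcase | hcase
      · rw [if_pos hcase] at h3
        rcases le_max_iff.mp htel with h' | h' <;> omega
      · rw [if_neg (by omega)] at h3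
        rcases le_max_iff.mp htel with h' | h' <;> omega
  have T1 : ∀ x, x < o → ∀ m, v x < q m → x < am m := by
    intro x hx m h
    by_cases hlad : ∃ n, δ n = x
    · obtain ⟨i, rfl⟩ := hlad
      rw [hvlad i] at h
      have him : i < m := by
        by_contra hh
        push_neg at hh
        have := Q1.monotone hh
        omega
      cases m with
      | zero => omega
      | succ n =>
        show δ i < δ n + 1
        exact olt1.mpr (hδmono.monotone (Nat.lt_succ_iff.mp him))
    · have hq_ns : q (ns x) ≤ v x := hv_ge_nl x hlad
      have hnm : ns x < m := by
        by_contra hh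
        push_neg at hh
        have := Q1.monotone hh
        omega
      cases m with
      | zero => omega
      | succ n =>
        show x < δ n + 1
        exact olt1.mpr (le_of_lt (lt_of_lt_of_le (hns1 x hx)
          (hδmono.monotone (Nat.lt_succ_iff.mp hnm))))
  -- the two genericity statements, proven first so that they can also provide c6
  have main7 : ∀ a, a ≤ o → ∀ B : ℕ, ∃ k, B < k ∧ G k = 1 ∧
      (∀ x, a ≤ x → x < o → v x < k → (L x).1 k = 1) ∧
      (∀ x, x < a → v x < k → (L x).1 k = 0) := by
    intro a ha B
    rcases eq_or_lt_of_le ha with rfl | hao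
    · obtain ⟨k, hk1, hk2, hk3, hk4⟩ := Q7 (B + 1)
      have hkB : B < k := by
        have : B + 1 ≤ q (B + 1) := Q1.le_apply
        omega
      have hnr : ¬ ∃ n, q n = k := by
        rintro ⟨j, rfl⟩
        rcases Nat.lt_or_ge j (B + 2) with h | h
        · have : q j ≤ q (B + 1) := Q1.monotone (by omega)
          omega
        · have : q (B + 1 + 1) ≤ q j := Q1.monotone h
          omega
      have hmbk : mb k = B + 1 + 1 := hmb3 k (B + 1 + 1) (by rw [hqpS]; exact hk1) (le_of_lt hk2)
      refine ⟨k, hkB, ?_, ?_, ?_⟩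
      · rw [hGo k hnr, hmbk]; exact hk3
      · intro x hax hx _
        exact absurd (lt_of_le_of_lt hax hx) (lt_irrefl _)
      · intro x hxa hvx
        have hT2 := T2 x hxa (B + 1 + 1) k (by rw [hqpS]; exact hk1) (le_of_lt hk2) hvx
        exact hk4 x hT2.1 hT2.2
    · obtain ⟨j, hj⟩ := hfsurj a hao
      set mm := max j (B + 1) with hmmdef
      have hjm : j ≤ mm := le_max_left _ _
      have hBm : B + 1 ≤ mm := le_max_right _ _
      obtain ⟨k, hk1, hk2, hk3, hk4, hk5⟩ := Q6 mm j hjm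
      have haδ : f j < δ (mm + 1) :=
        lt_of_lt_of_le (hfδ j) (hδmono.monotone (by omega))
      rw [min_eq_left (le_of_lt haδ), hj] at hk4 hk5
      have hkB : B < k := by
        have h1 : B + 1 ≤ q (B + 1) := Q1.le_apply
        have h2 : q (B + 1) ≤ q mm := Q1.monotone hBm
        omega
      have hnr : ¬ ∃ n, q n = k := by
        rintro ⟨i, rfl⟩
        rcases Nat.lt_or_ge i (mm + 1) with h | h
        · have : q i ≤ q mm := Q1.monotone (by omega)
          omega
        · have : q (mm + 1) ≤ q i := Q1.monotone h
          omega
      have hmbk : mb k = mm + 1 := hmb3 k (mm + 1) (by rw [hqpS]; exact hk1) (le_of_lt hk2)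
      refine ⟨k, hkB, ?_, ?_, ?_⟩
      · rw [hGo k hnr, hmbk]; exact hk3
      · intro x hax hx hvx
        have hT2 := T2 x hx (mm + 1) k (by rw [hqpS]; exact hk1) (le_of_lt hk2) hvx
        exact hk4 x hax hT2.1 hT2.2
      · intro x hxa hvx
        have hxo : x < o := lt_trans hxa hao
        have hT2 := T2 x hxo (mm + 1) k (by rw [hqpS]; exact hk1) (le_of_lt hk2) hvx
        exact hk5 x hxa hT2.2
  have main8 : ∀ B : ℕ, ∃ k, B < k ∧ G k = 0 ∧
      (∀ x, x < o → v x < k → (L x).1 k = 0) := by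
    intro B
    obtain ⟨k, hk1, hk2, hk3, hk4⟩ := Q8 (B + 1)
    have hkB : B < k := by
      have : B + 1 ≤ q (B + 1) := Q1.le_apply
      omega
    have hnr : ¬ ∃ n, q n = k := by
      rintro ⟨j, rfl⟩
      rcases Nat.lt_or_ge j (B + 2) with h | h
      · have : q j ≤ q (B + 1) := Q1.monotone (by omega)
        omega
      · have : q (B + 1 + 1) ≤ q j := Q1.monotone h
        omega
    have hmbk : mb k = B + 1 + 1 := hmb3 k (B + 1 + 1) (by rw [hqpS]; exact hk1) (le_of_lt hk2)
    refine ⟨k, hkB, ?_, ?_⟩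
    · rw [hGo k hnr, hmbk]; exact hk3
    · intro x hx hvx
      have hT2 := T2 x hx (B + 1 + 1) k (by rw [hqpS]; exact hk1) (le_of_lt hk2) hvx
      exact hk4 x hT2.1 hT2.2
  refine ⟨⟨G, v⟩, ?_, ?_, ?_, ?_, ?_, ?_, ?_, main7, main8⟩
  · -- c1
    intro β hβ k hk
    show ¬ Cross ((L β).1 k) (G k)
    have hk' : v β < k := hk
    by_cases hrange : ∃ n, q n = k
    · obtain ⟨m, rfl⟩ := hrange
      rw [hGq m]
      intro hcr
      have h1 : (L β).1 (q m) = 1 := cross_right2 hcr rfl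
      have hT2 := T2 β hβ m (q m) (hqp_lt m) le_rfl hk'
      have hT1 := T1 β hβ m hk'
      have h0 : (L β).1 (q m) = 0 := Q4 m β hT1 hT2.2
      rw [h0] at h1
      exact absurd h1 (by decide)
    · rw [hGo k hrange]
      have hbk : k ≤ q (mb k) := hmb1 k
      have hqpk : qp (mb k) < k := hqpmb k (by omega)
      have hT2 := T2 β hβ (mb k) k hqpk hbk hk'
      exact (E (mb k)).c1 β hT2.1 k hT2.2
  · -- c2
    intro β hβ
    show (L β).1 (v β) = 1 ∧ G (v β) = 2
    by_cases hlad : ∃ n, δ n = β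
    · obtain ⟨n, rfl⟩ := hlad
      rw [hvlad n]
      exact ⟨Q2 n, hGq n⟩
    · have hx1 : β < δ (ns β) := hns1 β hβ
      rw [hv_nl β hlad]
      rcases le_or_gt ((L (δ (ns β))).2 β) (q (ns β)) with hcase | hcase
      · rw [if_pos hcase]
        refine ⟨?_, hGq _⟩
        have hstrict : (L (δ (ns β))).2 β < q (ns β) :=
          lt_of_le_of_ne hcase (hne_cq β (ns β) hx1)
        apply Q3 (ns β) β ?_ hx1 hstrict
        cases hm : ns β with
        | zero => exact zero_le' (a := β)
        | succ n =>
          show δ n + 1 ≤ β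
          have h1 : ¬ β < δ n := hns2 β n hβ (by omega)
          have h2 : β ≠ δ n := fun h => hlad ⟨n, h.symm⟩
          rw [Ordinal.add_one_eq_succ, Order.succ_le_iff]
          exact lt_of_le_of_ne (le_of_not_gt h1) (Ne.symm h2)
      · rw [if_neg (by omega)]
        refine ⟨((E (ns β)).c2 β hx1).1, ?_⟩
        have hb1 : (L (δ (ns β))).2 β ≤ q (mb ((L (δ (ns β))).2 β)) := hmb1 _
        have hb2 : ∀ j, j < mb ((L (δ (ns β))).2 β) → q j < (L (δ (ns β))).2 β :=
          fun j hj => hmb2 _ j hj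
        have hnb : ns β < mb ((L (δ (ns β))).2 β) := by
          by_contra hh
          push_neg at hh
          have := Q1.monotone hh
          omega
        have hup : (L (δ (mb ((L (δ (ns β))).2 β)))).2 β = (L (δ (ns β))).2 β :=
          Lb β (ns β) _ hx1 (le_of_lt hnb) (fun j _ h2 => hb2 j h2)
        have hxb : β < δ (mb ((L (δ (ns β))).2 β)) :=
          lt_of_lt_of_le hx1 (hδmono.monotone (le_of_lt hnb))
        have hPq : (L (δ (ns β))).2 β ≠ q (mb ((L (δ (ns β))).2 β)) := by
          intro h
          exact hne_cq β _ hxb (by rw [hup]; exact h)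
        have hnr : ¬ ∃ n, q n = (L (δ (ns β))).2 β := by
          rintro ⟨j, hj⟩
          rcases Nat.lt_or_ge j (mb ((L (δ (ns β))).2 β)) with h | h
          · have := hb2 j h; omega
          · rcases Nat.eq_or_lt_of_le h with h' | h'
            · rw [← h'] at hj; exact hPq hj.symm
            · have := Q1 h'
              omega
        rw [hGo _ hnr]
        have h2 := ((E (mb ((L (δ (ns β))).2 β))).c2 β hxb).2
        rw [hup] at h2
        exact h2
  · -- c3
    intro γ β hγβ hβ hlt
    show (L β).2 γ = v γ
    have hlt' : v β < (L β).2 γ := hlt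
    have hγo : γ < o := lt_trans hγβ hβ
    obtain ⟨m, hγδm, hKm, hqK⟩ : ∃ m, γ < δ m ∧ (L (δ m)).2 γ = (L β).2 γ ∧ q m < (L β).2 γ := by
      by_cases hlad : ∃ n, δ n = β
      · obtain ⟨m, rfl⟩ := hlad
        rw [hvlad m] at hlt'
        exact ⟨m, hγβ, rfl, hlt'⟩
      · have hx1 : β < δ (ns β) := hns1 β hβ
        have hγδ : γ < δ (ns β) := lt_trans hγβ hx1
        rw [hv_nl β hlad] at hlt'
        rcases le_or_gt ((L (δ (ns β))).2 β) (q (ns β)) with hcase | hcase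
        · rw [if_pos hcase] at hlt'
          have hstrict : (L (δ (ns β))).2 β < q (ns β) :=
            lt_of_le_of_ne hcase (hne_cq β (ns β) hx1)
          have h3 := (E (ns β)).c3 γ β hγβ hx1 (by omega)
          exact ⟨ns β, hγδ, h3.symm, by omega⟩
        · rw [if_neg (by omega)] at hlt'
          have h3 := (E (ns β)).c3 γ β hγβ hx1 (by omega)
          exact ⟨ns β, hγδ, h3.symm, by omega⟩
    by_cases hladγ : ∃ n, δ n = γ
    · obtain ⟨i, rfl⟩ := hladγ
      have him : i < m := hδmono.lt_iff_lt.mp hγδm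
      have hlt2 : (L (δ m)).2 (δ i) < q m := Q5 m i m (by omega) (by omega)
      omega
    · have hnsm : ns γ ≤ m := hns3 γ m hγo hγδm
      have hdown := LcU γ (ns γ) m (hns1 γ hγo) hnsm (by rw [hKm]; exact hqK)
      have hforced : q (ns γ) < (L (δ (ns γ))).2 γ := by
        have hmono : q (ns γ) ≤ q m := Q1.monotone hnsm
        rw [hdown, hKm]
        omega
      rw [hv_nl γ hladγ, if_neg (not_le.mpr hforced), hdown, hKm]
  · -- c4
    intro γ β hγβ hβ
    show v γ ≤ max ((L β).2 γ) (v β)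
    have hγo : γ < o := lt_trans hγβ hβ
    have hvβ_ge : ∀ i : ℕ, (∀ i', γ < δ i' → i ≤ i') → q i ≤ v β := by
      intro i hmin
      by_cases hladβ : ∃ n, δ n = β
      · obtain ⟨m, rfl⟩ := hladβ
        rw [hvlad m]
        exact Q1.monotone (hmin m hγβ)
      · have h1 : q (ns β) ≤ v β := hv_ge_nl β hladβ
        have h2 : i ≤ ns β := hmin (ns β) (lt_trans hγβ (hns1 β hβ))
        exact le_trans (Q1.monotone h2) h1
    by_cases hladγ : ∃ n, δ n = γ
    · obtain ⟨i, rfl⟩ := hladγ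
      rw [hvlad i]
      refine le_max_of_le_right (hvβ_ge i ?_)
      intro i' hi'
      exact le_of_lt (hδmono.lt_iff_lt.mp hi')
    · rw [hv_nl γ hladγ]
      rcases le_or_gt ((L (δ (ns γ))).2 γ) (q (ns γ)) with hcase | hcase
      · rw [if_pos hcase]
        refine le_max_of_le_right (hvβ_ge (ns γ) ?_)
        intro i' hi'
        exact hns3 γ i' hγo hi'
      · rw [if_neg (not_le.mpr hcase)]
        by_contra hcon
        push_neg at hcon
        rw [max_lt_iff] at hcon
        obtain ⟨hKP, hvP⟩ := hcon
        by_cases hladβ : ∃ n, δ n = β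
        · obtain ⟨m, rfl⟩ := hladβ
          rw [hvlad m] at hvP
          have hγm : ns γ ≤ m := hns3 γ m hγo hγβ
          have hup := Lb γ (ns γ) m (hns1 γ hγo) hγm (fun j _ h2 => lt_trans (Q1 h2) hvP)
          omega
        · have hx1 : β < δ (ns β) := hns1 β hβ
          have hγn : γ < δ (ns β) := lt_trans hγβ hx1
          have hnsγβ : ns γ ≤ ns β := hns3 γ (ns β) hγo hγn
          have h4 := (E (ns β)).c4 γ β hγβ hx1
          rcases le_or_gt ((L (δ (ns β))).2 β) (q (ns β)) with hcβ | hcβ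
          · have hvβ : v β = q (ns β) := by rw [hv_nl β hladβ, if_pos hcβ]
            have h5 : q (ns β) < (L (δ (ns γ))).2 γ := by rw [← hvβ]; exact hvP
            have hup := Lb γ (ns γ) (ns β) (hns1 γ hγo) hnsγβ
              (fun j _ h2 => lt_trans (Q1 h2) h5)
            omega
          · have hvβ : v β = (L (δ (ns β))).2 β := by
              rw [hv_nl β hladβ, if_neg (not_le.mpr hcβ)]
            have h5 : (L (δ (ns β))).2 β < (L (δ (ns γ))).2 γ := by rw [← hvβ]; exact hvP
            have hup := Lb γ (ns γ) (ns β) (hns1 γ hγo) hnsγβ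
              (fun j _ h2 => lt_trans (Q1 h2) (lt_trans hcβ h5))
            omega
  · -- c5
    intro B
    show {β : Ordinal | β < o ∧ v β < B}.Finite
    have hexM : ∃ m, B ≤ q m := ⟨B, Q1.le_apply⟩
    have hM2 : ∀ m, q m < B → m < Nat.find hexM := by
      intro m hm
      by_contra hh
      push_neg at hh
      have h1 : B ≤ q (Nat.find hexM) := Nat.find_spec hexM
      have := Q1.monotone hh
      omega
    have hsub : {β : Ordinal | β < o ∧ v β < B} ⊆
        (⋃ m ∈ Finset.range (Nat.find hexM),
          {x : Ordinal | x < δ m ∧ (L (δ m)).2 x < max B (q m + 1)}) ∪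
        (δ '' {i | i < Nat.find hexM}) := by
      rintro β ⟨hβ, hvβ⟩
      by_cases hlad : ∃ n, δ n = β
      · obtain ⟨i, rfl⟩ := hlad
        right
        rw [hvlad i] at hvβ
        exact ⟨i, hM2 i hvβ, rfl⟩
      · left
        have hq_ns := hv_ge_nl β hlad
        have hns_lt : ns β < Nat.find hexM := hM2 _ (by omega)
        refine Set.mem_iUnion₂.mpr ⟨ns β, Finset.mem_range.mpr hns_lt, hns1 β hβ, ?_⟩
        rw [hv_nl β hlad] at hvβ
        rcases le_or_gt ((L (δ (ns β))).2 β) (q (ns β)) with hcase | hcase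
        · rw [if_pos hcase] at hvβ
          exact lt_of_lt_of_le (by omega) (le_max_right _ _)
        · rw [if_neg (by omega)] at hvβ
          exact lt_of_lt_of_le hvβ (le_max_left _ _)
    refine Set.Finite.subset (Set.Finite.union ?_ ?_) hsub
    · exact Set.Finite.biUnion (Finset.range (Nat.find hexM)).finite_toSet
        (fun m _ => (E m).c5 _)
    · exact Set.Finite.image _ (Set.finite_Iio _)
  · -- c6a
    apply Set.infinite_of_forall_exists_gt
    intro a
    obtain ⟨k, hk1, hk2, -, -⟩ := main7 o le_rfl a
    exact ⟨k, hk2, hk1⟩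
  · -- c6b
    apply Set.infinite_of_forall_exists_gt
    intro a
    refine ⟨q (a + 1), hGq (a + 1), ?_⟩
    have : a + 1 ≤ q (a + 1) := Q1.le_apply
    omega

theorem stage (o : Ordinal.{u}) (ho : o < (Cardinal.aleph 1).ord) (L : Ordinal.{u} → Row)
    (IH : ∀ β, β < o → ExtP L β (L β)) : ∃ r, ExtP L o r := by
  rcases Ordinal.zero_or_succ_or_isSuccLimit o with rfl | ⟨ξ, rfl⟩ | hlim
  · exact stage0 L
  · exact stageSucc ξ L (fun β hβ => IH β (Order.lt_succ_iff.mpr hβ))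
  · exact stageLimit o hlim ho L IH

noncomputable def F : Ordinal.{u} → Row :=
  (IsWellFounded.wf (r := ((· < ·) : Ordinal.{u} → Ordinal.{u} → Prop))).fix
    (fun o IH => epsilon (ExtP (fun β => if h : β < o then IH β h else default) o))

theorem F_eq (o : Ordinal.{u}) :
    F o = epsilon (ExtP (fun β => if _ : β < o then F β else default) o) := by
  rw [F]
  rw [WellFounded.fix_eq]

theorem extF : ∀ o : Ordinal.{u}, o < (Cardinal.aleph 1).ord → ExtP F o (F o) := by
  intro o
  induction o using Ordinal.induction with
  | _ o IH =>
    intro ho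
    have hst : ∃ r, ExtP F o r := stage o ho F (fun β hβ => IH β hβ (hβ.trans ho))
    have hag : ∀ β, β < o → (fun β => if _ : β < o then F β else default) β = F β := by
      intro β hβ; simp [hβ]
    have hst' : ∃ r, ExtP (fun β => if _ : β < o then F β else default) o r := by
      obtain ⟨r, hr⟩ := hst
      exact ⟨r, ExtP_congr (fun β hβ => (hag β hβ).symm) hr⟩
    have := epsilon_spec hst'
    rw [← F_eq] at this
    exact ExtP_congr hag this

end CC

end CoherentColoring

theorem exists_coherent_coloring :
    ∃ (g : Ordinal → ℕ → Fin 3) (c : Ordinal → Ordinal → ℕ),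
      (∀ β α : Ordinal, β < α → α < omega1 →
        ∀ k : ℕ, c β α < k → ({g β k, g α k} : Set (Fin 3)) ≠ {1, 2}) ∧
      (∀ β α : Ordinal, β < α → α < omega1 →
        g β (c β α) = 1 ∧ g α (c β α) = 2) ∧
      (∀ γ β α : Ordinal, γ < β → β < α → α < omega1 →
        c β α < c γ β → c γ β = c γ α) ∧
      (∀ α : Ordinal, α < omega1 → ∀ m : ℕ, {β : Ordinal | β < α ∧ c β α < m}.Finite) ∧
      (∀ α : Ordinal, α < omega1 →
        {k : ℕ | g α k = 1}.Infinite ∧ {k : ℕ | g α k = 2}.Infinite) := by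

  refine ⟨fun α => (CC.F α).1, fun β α => (CC.F α).2 β, ?_, ?_, ?_, ?_, ?_⟩
  · intro β α hβα hα k hk heq
    have hcross : CC.Cross ((CC.F β).1 k) ((CC.F α).1 k) := by
      set a := (CC.F β).1 k
      set b := (CC.F α).1 k
      have h1 : (1 : Fin 3) ∈ ({a, b} : Set (Fin 3)) := by rw [heq]; simp
      have h2 : (2 : Fin 3) ∈ ({a, b} : Set (Fin 3)) := by rw [heq]; simp
      simp only [Set.mem_insert_iff, Set.mem_singleton_iff] at h1 h2
      rcases h1 with h1 | h1 <;> rcases h2 with h2 | h2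
      · rw [← h1] at h2; exact absurd h2 (by decide)
      · exact Or.inl ⟨h1.symm, h2.symm⟩
      · exact Or.inr ⟨h2.symm, h1.symm⟩
      · rw [← h1] at h2; exact absurd h2 (by decide)
    exact (CC.extF α hα).c1 β hβα k hk hcross
  · intro β α hβα hα
    exact (CC.extF α hα).c2 β hβα
  · intro γ β α hγβ hβα hα h
    exact (CC.extF α hα).c3 γ β hγβ hβα h
  · intro α hα m
    exact (CC.extF α hα).c5 m
  · intro α hα
    exact ⟨(CC.extF α hα).c6a, (CC.extF α hα).c6b⟩
end

section
/- Let (X_α)_{α<ω₁} be a family of pairwise distinct infinite subsets of ℕ such that X_β ∩ X_α is finite for all β < α < ω₁, and suppose that for every α < ω₁ and every k ∈ ℕ the set {β < α : X_β ∩ X_α ⊆ {0,1,…,k}} is finite. Then the family {X_α : α < ω₁} is inseparable: for any two disjoint uncountable sets S, T ⊆ ω₁, the families {X_α : α ∈ S} and {X_α : α ∈ T} are not separated. -/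
open Set

/-- Two families `ℬ, 𝒞` of subsets of `ℕ` are separated if some `X ⊆ ℕ` almost contains
every member of `ℬ` and is almost disjoint from every member of `𝒞`. -/
def SeparatedFamilies (ℬ 𝒞 : Set (Set ℕ)) : Prop :=
  ∃ X : Set ℕ, (∀ B ∈ ℬ, (B \ X).Finite) ∧ (∀ C ∈ 𝒞, (C ∩ X).Finite)

lemma countable_Iio_of_lt_omega1 {o : Ordinal.{u}} (ho : o < omega1) :
    (Set.Iio o).Countable := by
  rw [Cardinal.countable_iff_lt_aleph_one, Ordinal.mk_Iio_ordinal]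
  have h1 : o.card < Cardinal.aleph 1 := Cardinal.lt_ord.1 ho
  calc Cardinal.lift.{u+1} o.card < Cardinal.lift.{u+1} (Cardinal.aleph 1) :=
        Cardinal.lift_lt.2 h1
    _ ≤ Cardinal.aleph 1 := by rw [Cardinal.lift_aleph]; simp

/-- An uncountable set of ordinals below ω₁ together with a finite-bound map
decomposes; some fiber is uncountable. -/
lemma exists_uncountable_fiber {S : Set Ordinal.{u}} (hS : ¬ S.Countable)
    (P : ℕ → Set Ordinal.{u}) (h : S ⊆ ⋃ k, P k) :
    ∃ k, ¬ (S ∩ P k).Countable := by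
  by_contra hc
  push_neg at hc
  apply hS
  have : S ⊆ ⋃ k, S ∩ P k := by
    intro x hx
    obtain ⟨k, hk⟩ := Set.mem_iUnion.1 (h hx)
    exact Set.mem_iUnion.2 ⟨k, hx, hk⟩
  exact (Set.countable_iUnion hc).mono this

theorem inseparable_of_unbounded_intersections
    (X : Ordinal → Set ℕ)
    (hinf : ∀ α : Ordinal, α < omega1 → (X α).Infinite)
    (hdist : ∀ α β : Ordinal, α < omega1 → β < omega1 → α ≠ β → X α ≠ X β)
    (had : ∀ β α : Ordinal, β < α → α < omega1 → (X β ∩ X α).Finite)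
    (hbig : ∀ α : Ordinal, α < omega1 → ∀ k : ℕ,
      {β : Ordinal | β < α ∧ X β ∩ X α ⊆ Set.Iic k}.Finite) :
    ∀ S T : Set Ordinal, S ⊆ Set.Iio omega1 → T ⊆ Set.Iio omega1 → Disjoint S T →
      ¬ S.Countable → ¬ T.Countable → ¬ SeparatedFamilies (X '' S) (X '' T) := by
  intro S T hSsub hTsub _hdisj hS hT hsep
  obtain ⟨Y, hB, hC⟩ := hsep
  -- every member of S has a bound for X α \ Y, every member of T for X α ∩ Y
  have hScov : S ⊆ ⋃ k, {α | X α \ Y ⊆ Set.Iic k} := by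
    intro α hα
    have : (X α \ Y).Finite := hB _ ⟨α, hα, rfl⟩
    obtain ⟨k, hk⟩ := this.bddAbove
    exact Set.mem_iUnion.2 ⟨k, fun n hn => hk hn⟩
  have hTcov : T ⊆ ⋃ k, {α | X α ∩ Y ⊆ Set.Iic k} := by
    intro α hα
    have : (X α ∩ Y).Finite := hC _ ⟨α, hα, rfl⟩
    obtain ⟨k, hk⟩ := this.bddAbove
    exact Set.mem_iUnion.2 ⟨k, fun n hn => hk hn⟩
  obtain ⟨k₁, hk₁⟩ := exists_uncountable_fiber hS _ hScov
  obtain ⟨k₂, hk₂⟩ := exists_uncountable_fiber hT _ hTcov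
  set k := max k₁ k₂ with hkdef
  set S' := S ∩ {α | X α \ Y ⊆ Set.Iic k₁} with hS'def
  set T' := T ∩ {α | X α ∩ Y ⊆ Set.Iic k₂} with hT'def
  -- take a countable infinite subset of S'
  have hS'inf : S'.Infinite := fun hfin => hk₁ hfin.countable
  let f : ℕ ↪ S' := Set.Infinite.natEmbedding S' hS'inf
  -- γ := sup of the f n's, γ < ω₁
  have hflt : ∀ n : ℕ, ((f n : Ordinal)) < omega1 := fun n => hSsub (f n).2.1
  have hγ : (⨆ n : ℕ, (f n : Ordinal)) < omega1 :=
    by unfold omega1 at hflt ⊢; rw [Cardinal.ord_aleph] at hflt ⊢; exact Ordinal.iSup_lt_omega_one hflt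
  set γ := ⨆ n : ℕ, (f n : Ordinal) with hγdef
  -- pick α ∈ T' with γ < α
  have hT'unb : ∃ α ∈ T', γ < α := by
    by_contra hcon
    push_neg at hcon
    have hsucc : γ + 1 < omega1 := by
      have : Order.IsSuccLimit omega1 := Cardinal.isSuccLimit_ord (by
        simpa using Cardinal.aleph0_le_aleph 1)
      simpa [Order.succ_eq_add_one] using this.succ_lt hγ
    have : T' ⊆ Set.Iio (γ + 1) := fun α hα =>
      Order.lt_succ_iff.2 (hcon α hα) |>.trans_le (le_of_eq (Order.succ_eq_add_one γ).symm) |> fun h => h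
    exact hk₂ ((countable_Iio_of_lt_omega1 hsucc).mono this)
  obtain ⟨α, hαT', hγα⟩ := hT'unb
  have hαlt : α < omega1 := hTsub hαT'.1
  -- the finite exceptional set
  have hF : {β : Ordinal | β < α ∧ X β ∩ X α ⊆ Set.Iic k}.Finite := hbig α hαlt k
  -- range of f is infinite, so some f n escapes the finite set
  have hfn : ∃ n : ℕ, (f n : Ordinal) ∉ {β : Ordinal | β < α ∧ X β ∩ X α ⊆ Set.Iic k} := by
    by_contra hcon
    push_neg at hcon
    have : Set.range (fun n => (f n : Ordinal)) ⊆
        {β : Ordinal | β < α ∧ X β ∩ X α ⊆ Set.Iic k} := by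
      rintro _ ⟨n, rfl⟩; exact hcon n
    have hinj : Function.Injective (fun n => (f n : Ordinal)) := fun a b h =>
      f.injective (Subtype.ext h)
    exact (Set.infinite_range_of_injective hinj) (hF.subset this)
  obtain ⟨n, hn⟩ := hfn
  set β := (f n : Ordinal) with hβdef
  have hβS' : β ∈ S' := (f n).2
  have hβα : β < α := lt_of_le_of_lt (Ordinal.le_iSup (fun n : ℕ => (f n : Ordinal)) n) hγα
  -- so X β ∩ X α ⊄ Iic k
  have hnot : ¬ (X β ∩ X α ⊆ Set.Iic k) := fun h => hn ⟨hβα, h⟩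
  obtain ⟨m, hm, hmk⟩ := Set.not_subset.1 hnot
  simp only [Set.mem_Iic, not_le] at hmk
  -- m ∈ X β, m > k ≥ k₁ so m ∉ X β \ Y, hence m ∈ Y
  have hmY : m ∈ Y := by
    by_contra hmY
    have : m ∈ X β \ Y := ⟨hm.1, hmY⟩
    have := hβS'.2 this
    simp only [Set.mem_Iic] at this
    exact absurd (this.trans (le_max_left k₁ k₂)) (not_le.2 hmk)
  -- but m ∈ X α ∩ Y ⊆ Iic k₂ ≤ k, contradiction
  have := hαT'.2 ⟨hm.2, hmY⟩
  simp only [Set.mem_Iic] at this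
  exact absurd (this.trans (le_max_right k₁ k₂)) (not_le.2 hmk)
end

section
/- If 𝒜 is an uncountable ℝ-embeddable almost disjoint family of infinite subsets of ℕ, then there exist disjoint uncountable subfamilies ℬ, 𝒞 ⊆ 𝒜 which are separated. -/
open Set

lemma exists_split (S : Set ℝ) (hS : ¬ S.Countable) :
    ∃ r : ℝ, ¬ (S ∩ Set.Iio r).Countable ∧ ¬ (S ∩ Set.Ioi r).Countable := by
  by_contra h
  push_neg at h
  -- there is some l with left part uncountable
  have hl : ∃ l : ℝ, ¬ (S ∩ Set.Iio l).Countable := by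
    by_contra hl
    push_neg at hl
    apply hS
    have : S ⊆ ⋃ n : ℕ, S ∩ Set.Iio (n : ℝ) := by
      intro s hs
      obtain ⟨n, hn⟩ := exists_nat_gt s
      exact mem_iUnion.2 ⟨n, hs, hn⟩
    exact ((Set.countable_iUnion fun n : ℕ => hl (n : ℝ)).mono this)
  have hr : ∃ t : ℝ, ¬ (S ∩ Set.Ioi t).Countable := by
    by_contra hr
    push_neg at hr
    apply hS
    have : S ⊆ ⋃ n : ℕ, S ∩ Set.Ioi (-(n : ℝ)) := by
      intro s hs
      obtain ⟨n, hn⟩ := exists_nat_gt (-s)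
      exact mem_iUnion.2 ⟨n, hs, show -(n:ℝ) < s from neg_lt.mp hn⟩
    exact ((Set.countable_iUnion fun n : ℕ => hr (-(n:ℝ))).mono this)
  obtain ⟨l, hl⟩ := hl
  obtain ⟨t0, ht0⟩ := hr
  set R : Set ℝ := {t | ¬ (S ∩ Set.Ioi t).Countable} with hR
  have hRne : R.Nonempty := ⟨t0, ht0⟩
  have hub : ∀ t ∈ R, t ≤ l := by
    intro t ht
    by_contra hlt
    push_neg at hlt
    exact ht ((h l hl).mono (inter_subset_inter_right _ (Ioi_subset_Ioi hlt.le)))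
  have hbdd : BddAbove R := ⟨l, hub⟩
  set a := sSup R with ha
  have hright : ∀ t, a < t → (S ∩ Set.Ioi t).Countable := by
    intro t hat
    by_contra hc
    exact absurd (le_csSup hbdd hc) (not_le.2 hat)
  have hleft : ∀ t, t < a → (S ∩ Set.Iio t).Countable := by
    intro t hta
    obtain ⟨s, hsR, hts⟩ := exists_lt_of_lt_csSup hRne hta
    have : ¬ (S ∩ Set.Ioi t).Countable := by
      intro hc
      exact hsR (hc.mono (inter_subset_inter_right _ (Ioi_subset_Ioi hts.le)))
    by_contra hcl
    exact this (h t hcl)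
  apply hS
  have hsub : S ⊆ (⋃ q : {q : ℚ // (q : ℝ) < a}, S ∩ Set.Iio (q : ℝ)) ∪ {a} ∪
      ⋃ q : {q : ℚ // a < (q : ℝ)}, S ∩ Set.Ioi (q : ℝ) := by
    intro s hs
    rcases lt_trichotomy s a with hlt | heq | hgt
    · obtain ⟨q, hq1, hq2⟩ := exists_rat_btwn hlt
      exact Or.inl (Or.inl (mem_iUnion.2 ⟨⟨q, hq2⟩, hs, hq1⟩))
    · exact Or.inl (Or.inr heq)
    · obtain ⟨q, hq1, hq2⟩ := exists_rat_btwn hgt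
      exact Or.inr (mem_iUnion.2 ⟨⟨q, hq1⟩, hs, hq2⟩)
  refine Set.Countable.mono hsub ?_
  refine (Set.Countable.union ?_ ?_)
  · exact (Set.Countable.union (Set.countable_iUnion fun q => hleft _ q.2)
      (Set.countable_singleton a))
  · exact Set.countable_iUnion fun q => hright _ q.2

theorem rEmbeddable_uncountable_has_separated_subfamilies
    (𝒜 : Set (Set ℕ)) (h𝒜 : IsAlmostDisjointFamily 𝒜)
    (hunc : ¬ 𝒜.Countable) (hemb : REmbeddable 𝒜) :
    ∃ ℬ 𝒞 : Set (Set ℕ), ℬ ⊆ 𝒜 ∧ 𝒞 ⊆ 𝒜 ∧ Disjoint ℬ 𝒞 ∧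
      ¬ ℬ.Countable ∧ ¬ 𝒞.Countable ∧ SeparatedFamilies ℬ 𝒞 := by
  obtain ⟨f, x, hlim, hinj⟩ := hemb
  have hS : ¬ (x '' 𝒜).Countable := fun hc =>
    hunc (Set.countable_of_injective_of_countable_image hinj hc)
  obtain ⟨r, hB0, hC0⟩ := exists_split (x '' 𝒜) hS
  refine ⟨{A ∈ 𝒜 | x A < r}, {A ∈ 𝒜 | r < x A}, fun A hA => hA.1, fun A hA => hA.1, ?_, ?_, ?_, ?_⟩
  · rw [Set.disjoint_left]
    rintro A ⟨_, h1⟩ ⟨_, h2⟩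
    exact absurd (h1.trans h2) (lt_irrefl _)
  · intro hc
    apply hB0
    refine (hc.image x).mono ?_
    rintro y ⟨⟨A, hA, rfl⟩, hy⟩
    exact ⟨A, ⟨hA, hy⟩, rfl⟩
  · intro hc
    apply hC0
    refine (hc.image x).mono ?_
    rintro y ⟨⟨A, hA, rfl⟩, hy⟩
    exact ⟨A, ⟨hA, hy⟩, rfl⟩
  · refine ⟨{n | f n < r}, ?_, ?_⟩
    · rintro B ⟨hB, hxB⟩
      have hev : ∀ᶠ n in Filter.atTop ⊓ Filter.principal B, f n < r :=
        (hlim B hB).eventually_lt_const hxB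
      rw [Filter.eventually_inf_principal, Filter.eventually_atTop] at hev
      obtain ⟨N, hN⟩ := hev
      refine (Set.finite_Iio N).subset ?_
      rintro n ⟨hnB, hnX⟩
      by_contra hn
      exact hnX (hN n (not_lt.1 hn) hnB)
    · rintro C ⟨hC, hxC⟩
      have hev : ∀ᶠ n in Filter.atTop ⊓ Filter.principal C, r < f n :=
        (hlim C hC).eventually_const_lt hxC
      rw [Filter.eventually_inf_principal, Filter.eventually_atTop] at hev
      obtain ⟨N, hN⟩ := hev
      refine (Set.finite_Iio N).subset ?_
      rintro n ⟨hnC, hnX⟩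
      by_contra hn
      exact absurd hnX (not_lt.2 (hN n (not_lt.1 hn) hnC).le)
end

section
/- Let 𝒜 be an almost disjoint family of infinite subsets of ℕ and let φ : 𝒜 → [0,2π). Then for every element a of the Akemann–Doner algebra AD(𝒜,φ) and every A ∈ 𝒜, there exists a complex number z such that lim_{n∈A} a(n) = z·p_{φ(A)} (the limit taken in M₂ along the cofinite filter on A). -/
open Filter Topology Set
open scoped ENNReal

set_option synthInstance.maxHeartbeats 1000000
set_option maxHeartbeats 1000000

noncomputable section

/-- `M₂`, the C*-algebra of 2×2 complex matrices (as operators on ℂ²). -/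
abbrev M2 : Type := EuclideanSpace ℂ (Fin 2) →L[ℂ] EuclideanSpace ℂ (Fin 2)

/-- the rank one projection `p_θ` as a matrix -/
def pmat (θ : ℝ) : Matrix (Fin 2) (Fin 2) ℂ :=
  !![((Real.sin θ ^ 2 : ℝ) : ℂ), ((Real.sin θ * Real.cos θ : ℝ) : ℂ);
     ((Real.sin θ * Real.cos θ : ℝ) : ℂ), ((Real.cos θ ^ 2 : ℝ) : ℂ)]

/-- the rank one projection `p_θ` as an element of `M₂` -/
def pTheta (θ : ℝ) : M2 := Matrix.toEuclideanCLM (𝕜 := ℂ) (pmat θ)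

/-- `ℓ∞(M₂)`, the C*-algebra of norm-bounded sequences in `M₂`. -/
abbrev Linfty : Type := lp (fun _ : ℕ => M2) ∞

/-- The element `P_{A,θ}` of `ℓ∞(M₂)`. -/
def Pelem (A : Set ℕ) (θ : ℝ) : Linfty :=
  ⟨A.indicator (fun _ => pTheta θ), by
    apply memℓp_infty
    refine ⟨‖pTheta θ‖, ?_⟩
    rintro x ⟨n, rfl⟩
    by_cases h : n ∈ A
    · simp [Set.indicator_of_mem h]
    · simp [Set.indicator_of_notMem h, norm_nonneg]⟩

/-- `c₀(M₂)`: sequences of matrices whose norms converge to `0`. -/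
def c0 : Set Linfty := {x | Filter.Tendsto (fun n => ‖x n‖) Filter.atTop (nhds 0)}

/-- The Akemann-Doner algebra `AD(𝒜, φ)`: the closed *-subalgebra of `ℓ∞(M₂)` generated by
`c₀(M₂)` together with the projections `P_{A, φ(A)}` for `A ∈ 𝒜`. -/
def AD (𝒜 : Set (Set ℕ)) (φ : Set ℕ → ℝ) : Set Linfty :=
  closure (NonUnitalStarAlgebra.adjoin ℂ (c0 ∪ (fun A => Pelem A (φ A)) '' 𝒜) : Set Linfty)

/-- `S` has a dense subset of cardinality `κ`. -/
def DenseSubsetCard (S : Set Linfty) (κ : Cardinal) : Prop :=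
  ∃ D : Set Linfty, D ⊆ S ∧ S ⊆ closure D ∧ Cardinal.mk ↥D = κ

/-- `S` has density `κ`: a dense subset of cardinality `κ` but none of smaller cardinality. -/
def HasDensity (S : Set Linfty) (κ : Cardinal) : Prop :=
  DenseSubsetCard S κ ∧ ∀ μ : Cardinal, DenseSubsetCard S μ → κ ≤ μ

/-- `B` is a commutative closed *-subalgebra contained in `S`. -/
def IsCommClosedStarSubalgOf (B : NonUnitalStarSubalgebra ℂ Linfty) (S : Set Linfty) : Prop :=
  (B : Set Linfty) ⊆ S ∧ IsClosed (B : Set Linfty) ∧ ∀ x ∈ B, ∀ y ∈ B, x * y = y * x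

-- aux lemmas
-- aux lemmas
lemma pmat_mul (θ : ℝ) : pmat θ * pmat θ = pmat θ := by
  have h : (Complex.sin θ)^2 + (Complex.cos θ)^2 = 1 := Complex.sin_sq_add_cos_sq θ
  ext i j
  fin_cases i <;> fin_cases j <;>
    simp [pmat, Matrix.mul_apply, Fin.sum_univ_two, Complex.ofReal_sin, Complex.ofReal_cos]
  · linear_combination (Complex.sin θ)^2 * h
  · linear_combination (Complex.sin θ * Complex.cos θ) * h
  · linear_combination (Complex.sin θ * Complex.cos θ) * h
  · linear_combination (Complex.cos θ)^2 * h

lemma pmat_star (θ : ℝ) : star (pmat θ) = pmat θ := by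
  rw [Matrix.star_eq_conjTranspose]
  ext i j
  fin_cases i <;> fin_cases j <;>
    · simp only [pmat, Matrix.conjTranspose_apply]
      norm_num
      simp only [← Complex.ofReal_sin, ← Complex.ofReal_cos, ← Complex.ofReal_pow,
        ← Complex.ofReal_mul, Complex.conj_ofReal]

lemma pmat_ne (θ : ℝ) : pmat θ ≠ 0 := by
  intro h
  have h00 : pmat θ 0 0 = 0 := by rw [h]; rfl
  have h11 : pmat θ 1 1 = 0 := by rw [h]; rfl
  simp only [pmat, Matrix.cons_val', Matrix.cons_val_zero, Matrix.cons_val_one,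
    Matrix.head_cons, Matrix.head_fin_const, Matrix.empty_val', Matrix.cons_val_fin_one,
    Matrix.of_apply, Complex.ofReal_eq_zero] at h00 h11
  nlinarith [Real.sin_sq_add_cos_sq θ]

lemma pTheta_mul (θ : ℝ) : pTheta θ * pTheta θ = pTheta θ := by
  rw [pTheta, ← map_mul, pmat_mul]

lemma pTheta_star (θ : ℝ) : star (pTheta θ) = pTheta θ := by
  rw [pTheta, ← map_star, pmat_star]

lemma pTheta_ne (θ : ℝ) : pTheta θ ≠ 0 := by
  intro h
  apply pmat_ne θ
  apply (Matrix.toEuclideanCLM (𝕜 := ℂ) (n := Fin 2)).injective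
  rw [map_zero]
  exact h

lemma Pelem_apply (A : Set ℕ) (θ : ℝ) (n : ℕ) :
    (Pelem A θ : ∀ _ : ℕ, M2) n = A.indicator (fun _ => pTheta θ) n := rfl

instance : ContinuousStar M2 :=
  ⟨(ContinuousLinearMap.adjoint (E := EuclideanSpace ℂ (Fin 2))
      (F := EuclideanSpace ℂ (Fin 2))).continuous⟩

/-- The set of sequences converging to a scalar multiple of `p` along `F`. -/
def Slim (F : Filter ℕ) (p : M2) : Set Linfty :=
  {x | ∃ z : ℂ, Filter.Tendsto (fun n => x n) F (𝓝 (z • p))}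

lemma norm_le_of_tendsto_Slim (F : Filter ℕ) [F.NeBot] (x : Linfty) (L : M2)
    (hx : Filter.Tendsto (fun n => x n) F (𝓝 L)) : ‖L‖ ≤ ‖x‖ :=
  le_of_tendsto hx.norm (Eventually.of_forall fun n =>
    lp.norm_apply_le_norm ENNReal.top_ne_zero x n)

lemma Slim_isClosed (F : Filter ℕ) [F.NeBot] (p : M2) (hp : p ≠ 0) :
    IsClosed (Slim F p) := by
  have hppos : (0 : ℝ) < ‖p‖ := norm_pos_iff.mpr hp
  refine isClosed_of_closure_subset ?_
  intro b hb
  have h1 : ∀ k : ℕ, ∃ y ∈ Slim F p, dist b y < 1 / ((k : ℝ) + 1) := fun k =>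
    Metric.mem_closure_iff.mp hb _ (by positivity)
  choose x hx hxd using h1
  have hxb : Filter.Tendsto x atTop (𝓝 b) := by
    rw [tendsto_iff_dist_tendsto_zero]
    refine squeeze_zero (fun k => dist_nonneg) (fun k => ?_)
      tendsto_one_div_add_atTop_nhds_zero_nat
    rw [dist_comm]
    exact (hxd k).le
  choose z hz using hx
  have hnorm : ∀ k j, ‖z k - z j‖ * ‖p‖ ≤ ‖x k - x j‖ := by
    intro k j
    have ht : Filter.Tendsto (fun n => (x k - x j) n) F (𝓝 ((z k - z j) • p)) := by
      have e : (z k - z j) • p = z k • p - z j • p := sub_smul (z k) (z j) p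
      rw [e]
      refine ((hz k).sub (hz j)).congr fun n => ?_
      exact (congrFun (lp.coeFn_sub (x k) (x j)) n).symm
    have h2 := norm_le_of_tendsto_Slim F _ _ ht
    have e2 : ‖(z k - z j) • p‖ = ‖z k - z j‖ * ‖p‖ := norm_smul (z k - z j) p
    rwa [e2] at h2
  have hcz : CauchySeq z := by
    have hcx : CauchySeq x := hxb.cauchySeq
    rw [Metric.cauchySeq_iff] at hcx ⊢
    intro ε hε
    obtain ⟨N, hN⟩ := hcx (ε * ‖p‖) (by positivity)
    refine ⟨N, fun m hm n hn => ?_⟩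
    have h1 := hnorm m n
    have h2 := hN m hm n hn
    rw [dist_eq_norm] at h2 ⊢
    calc ‖z m - z n‖ = ‖z m - z n‖ * ‖p‖ / ‖p‖ := by field_simp
      _ ≤ ‖x m - x n‖ / ‖p‖ := by gcongr
      _ < ε := by rwa [div_lt_iff₀ hppos, mul_comm] at *
  obtain ⟨w, hw⟩ := cauchySeq_tendsto_of_complete hcz
  refine ⟨w, ?_⟩
  refine TendstoUniformly.tendsto_of_eventually_tendsto (F := fun k n => x k n)
    (L := fun k => z k • p) ?_ (Eventually.of_forall hz) (hw.smul_const p)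
  rw [Metric.tendstoUniformly_iff]
  intro ε hε
  filter_upwards [Metric.tendsto_nhds.mp hxb ε hε] with k hk n
  calc dist (b n) (x k n) = ‖(b - x k) n‖ := by
        rw [dist_eq_norm]
        exact congrArg norm (congrFun (lp.coeFn_sub b (x k)) n).symm
    _ ≤ ‖b - x k‖ := lp.norm_apply_le_norm ENNReal.top_ne_zero _ n
    _ = dist (x k) b := by rw [dist_eq_norm, norm_sub_rev]
    _ < ε := hk

lemma Slim_add (F : Filter ℕ) (p : M2) {x y : Linfty}
    (hx : x ∈ Slim F p) (hy : y ∈ Slim F p) : x + y ∈ Slim F p := by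
  obtain ⟨z1, h1⟩ := hx
  obtain ⟨z2, h2⟩ := hy
  refine ⟨z1 + z2, ?_⟩
  have e : (z1 + z2) • p = z1 • p + z2 • p := add_smul z1 z2 p
  rw [e]
  exact (h1.add h2).congr fun n => (congrFun (lp.coeFn_add x y) n).symm

lemma Slim_zero (F : Filter ℕ) (p : M2) : (0 : Linfty) ∈ Slim F p := by
  refine ⟨0, ?_⟩
  have e : (0 : ℂ) • p = 0 := zero_smul ℂ p
  rw [e]
  exact tendsto_const_nhds.congr fun n => (congrFun (lp.coeFn_zero (fun _ : ℕ => M2) ∞) n).symm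

lemma Slim_mul (F : Filter ℕ) (p : M2) (hpp : p * p = p) {x y : Linfty}
    (hx : x ∈ Slim F p) (hy : y ∈ Slim F p) : x * y ∈ Slim F p := by
  obtain ⟨z1, h1⟩ := hx
  obtain ⟨z2, h2⟩ := hy
  refine ⟨z1 * z2, ?_⟩
  have e : (z1 * z2) • p = (z1 • p) * (z2 • p) := by
    rw [smul_mul_assoc, mul_smul_comm, hpp, smul_smul]
  rw [e]
  exact (h1.mul h2).congr fun n => (congrFun (lp.infty_coeFn_mul x y) n).symm

lemma Slim_smul (F : Filter ℕ) (p : M2) (r : ℂ) {x : Linfty}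
    (hx : x ∈ Slim F p) : r • x ∈ Slim F p := by
  obtain ⟨z1, h1⟩ := hx
  refine ⟨r * z1, ?_⟩
  have e : (r * z1) • p = r • z1 • p := mul_smul r z1 p
  rw [e]
  exact (h1.const_smul r).congr fun n => (congrFun (lp.coeFn_smul r x) n).symm

lemma Slim_star (F : Filter ℕ) (p : M2) (hps : star p = p) {x : Linfty}
    (hx : x ∈ Slim F p) : star x ∈ Slim F p := by
  obtain ⟨z1, h1⟩ := hx
  refine ⟨star z1, ?_⟩
  have e : (star z1) • p = star (z1 • p) := by rw [star_smul, hps]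
  rw [e]
  exact h1.star.congr fun n => (lp.star_apply x n).symm

lemma Slim_c0 (F : Filter ℕ) (hF : F ≤ Filter.atTop) (p : M2) {x : Linfty}
    (hx : x ∈ c0) : x ∈ Slim F p := by
  refine ⟨0, ?_⟩
  have e : (0 : ℂ) • p = 0 := zero_smul ℂ p
  rw [e]
  have h1 : Filter.Tendsto (fun n => x n) atTop (𝓝 0) :=
    tendsto_zero_iff_norm_tendsto_zero.mpr hx
  exact h1.mono_left hF

lemma Slim_adjoin (F : Filter ℕ) (hF : F ≤ Filter.atTop) (p : M2)
    (hpp : p * p = p) (hps : star p = p)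
    (G : Set Linfty) (hG : G ⊆ Slim F p) :
    (NonUnitalStarAlgebra.adjoin ℂ (c0 ∪ G) : Set Linfty) ⊆ Slim F p := by
  intro x hx
  induction hx using NonUnitalStarAlgebra.adjoin_induction with
  | mem x hx =>
    rcases hx with hx | hx
    · exact Slim_c0 F hF p hx
    · exact hG hx
  | add x y hx hy ihx ihy => exact Slim_add F p ihx ihy
  | zero => exact Slim_zero F p
  | mul x y hx hy ihx ihy => exact Slim_mul F p hpp ihx ihy
  | smul r x hx ihx => exact Slim_smul F p r ihx
  | star x hx ihx => exact Slim_star F p hps ihx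

lemma Pelem_self_mem_Slim (A : Set ℕ) (θ : ℝ) :
    Pelem A θ ∈ Slim (Filter.atTop ⊓ Filter.principal A) (pTheta θ) := by
  refine ⟨1, ?_⟩
  have e : (1 : ℂ) • pTheta θ = pTheta θ := one_smul ℂ (pTheta θ)
  rw [e]
  refine tendsto_const_nhds.congr' ?_
  have hAF : ∀ᶠ n in Filter.atTop ⊓ Filter.principal A, n ∈ A := by
    rw [Filter.eventually_inf_principal]
    exact Filter.Eventually.of_forall fun n hn => hn
  filter_upwards [hAF] with n hn
  rw [Pelem_apply, Set.indicator_of_mem hn]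

lemma Pelem_other_mem_Slim (A B : Set ℕ) (hfin : (A ∩ B).Finite) (θ : ℝ) (p : M2) :
    Pelem B θ ∈ Slim (Filter.atTop ⊓ Filter.principal A) p := by
  refine ⟨0, ?_⟩
  have e : (0 : ℂ) • p = 0 := zero_smul ℂ p
  rw [e]
  obtain ⟨N, hN⟩ := hfin.bddAbove
  refine tendsto_const_nhds.congr' ?_
  rw [Filter.EventuallyEq, Filter.eventually_inf_principal]
  filter_upwards [Filter.eventually_gt_atTop N] with n hn hnA
  have hnB : n ∉ B := fun hB' => absurd (hN ⟨hnA, hB'⟩) (not_le.mpr hn)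
  rw [Pelem_apply, Set.indicator_of_notMem hnB]


theorem AD_limit_scalar_multiple_of_projection
    (𝒜 : Set (Set ℕ)) (h𝒜 : IsAlmostDisjointFamily 𝒜)
    (φ : Set ℕ → ℝ) (hφ : ∀ A ∈ 𝒜, φ A ∈ Set.Ico 0 (2 * Real.pi))
    (a : Linfty) (ha : a ∈ AD 𝒜 φ) (A : Set ℕ) (hA : A ∈ 𝒜) :
    ∃ z : ℂ, LimAlong A (fun n => a n) (z • pTheta (φ A)) := by
  obtain ⟨-, hinf, hdisj⟩ := h𝒜
  have hFne : (Filter.atTop ⊓ Filter.principal A).NeBot := by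
    have h1 := (hinf A hA).frequently_cofinite
    rw [Nat.cofinite_eq_atTop] at h1
    exact Filter.frequently_mem_iff_neBot.mp h1
  have hG : (fun B => Pelem B (φ B)) '' 𝒜 ⊆
      Slim (Filter.atTop ⊓ Filter.principal A) (pTheta (φ A)) := by
    rintro - ⟨B, hB, rfl⟩
    by_cases hBA : B = A
    · subst hBA
      exact Pelem_self_mem_Slim B (φ B)
    · exact Pelem_other_mem_Slim A B (hdisj A hA B hB (fun h => hBA h.symm)) (φ B) _
  have hsub := Slim_adjoin (Filter.atTop ⊓ Filter.principal A) inf_le_left (pTheta (φ A))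
    (pTheta_mul (φ A)) (pTheta_star (φ A)) _ hG
  have hclosed := Slim_isClosed (Filter.atTop ⊓ Filter.principal A) (pTheta (φ A))
    (pTheta_ne (φ A))
  have haS : a ∈ Slim (Filter.atTop ⊓ Filter.principal A) (pTheta (φ A)) :=
    (hclosed.closure_subset_iff.mpr hsub) ha
  obtain ⟨z, hz⟩ := haS
  exact ⟨z, hz⟩

end
end
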